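/- arXiv:2510.21047 — 9 statements merged into one kernel-verified Lean document; each statement's English description precedes it below -/
import Mathlib

section
/- Let n and L be integers with 1 ≤ L < n/2, and let A be an n×n real symmetric Toeplitz matrix with entries A_{ij} = a_{|i-j|}. Then θᵀAθ = 0 for every θ ∈ Θ_L if and only if the following four conditions hold: (i) a_0 + 2a_1 + ⋯ + 2a_L = 0; (ii) a_1 + 2a_2 + ⋯ + L·a_L = 0; (iii) a_{L+1} = a_{L+2} = ⋯ = a_{n-L-1} = 0; (iv) L·a_{n-L} + (L−1)·a_{n-L+1} + ⋯ + a_{n-1} = 0. -/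
open Finset

/-- `Θ_L`: the set of piecewise-constant vectors in `ℝⁿ` all of whose constant
segments have length at least `L`. -/
def ThetaSet (n L : ℕ) : Set (Fin n → ℝ) :=
  {θ | ∃ (k : ℕ) (t : ℕ → ℕ) (c : ℕ → ℝ),
    0 < k ∧ t 0 = 0 ∧ t k = n ∧
    (∀ j < k, t j + L ≤ t (j + 1)) ∧
    (∀ j < k, ∀ i : Fin n, t j ≤ i.val → i.val < t (j + 1) → θ i = c j)}


private def nd (i j : ℕ) : ℕ := ((i:ℤ) - (j:ℤ)).natAbs

private lemma nd_of_le {i j : ℕ} (h : j ≤ i) : nd i j = i - j := by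
  unfold nd; omega

private lemma nd_comm (i j : ℕ) : nd i j = nd j i := by
  unfold nd; omega

private lemma sum_range_reflect' (F : ℕ → ℕ → ℝ) (m : ℕ) :
    ∑ i ∈ Finset.range m, F i (m - i) = ∑ h ∈ Finset.Icc 1 m, F (m - h) h := by
  apply Finset.sum_nbij' (fun i => m - i) (fun h => m - h)
  · intro i hi; simp only [Finset.mem_range] at hi; simp only [Finset.mem_Icc]; omega
  · intro h hh; simp only [Finset.mem_Icc] at hh; simp only [Finset.mem_range]; omega
  · intro i hi; simp only [Finset.mem_range] at hi; omega
  · intro h hh; simp only [Finset.mem_Icc] at hh; omega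
  · intro i hi; simp only [Finset.mem_range] at hi
    congr 1; omega

private lemma quad_decomp (b φ : ℕ → ℝ) (n : ℕ) :
    ∑ i ∈ range n, ∑ j ∈ range n, b (nd i j) * φ i * φ j
      = b 0 * ∑ i ∈ range n, φ i ^ 2
        + 2 * ∑ h ∈ Icc 1 (n - 1), b h * ∑ i ∈ range (n - h), φ i * φ (i + h) := by
  induction n with
  | zero => simp
  | succ n ih =>
    by_cases hn : n = 0
    · subst hn
      simp [nd]
      ring
    · have hn1 : 1 ≤ n := Nat.one_le_iff_ne_zero.mpr hn
      have key1 : ∑ i ∈ range (n+1), ∑ j ∈ range (n+1), b (nd i j) * φ i * φ j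
          = (∑ i ∈ range n, ∑ j ∈ range n, b (nd i j) * φ i * φ j)
            + (2 * ((∑ i ∈ range n, b (n - i) * φ i) * φ n) + b 0 * φ n ^ 2) := by
        simp only [Finset.sum_range_succ, Finset.sum_add_distrib]
        have h1 : ∀ i ∈ range n, b (nd i n) * φ i * φ n = b (n - i) * φ i * φ n := by
          intro i hi; simp only [mem_range] at hi
          have : nd i n = n - i := by unfold nd; omega
          rw [this]
        have h2 : ∀ j ∈ range n, b (nd n j) * φ n * φ j = b (n - j) * φ j * φ n := by
          intro j hj; simp only [mem_range] at hj
          have : nd n j = n - j := nd_of_le (by omega)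
          rw [this]; ring
        rw [Finset.sum_congr rfl h1, Finset.sum_congr rfl h2]
        have h3 : nd n n = 0 := by unfold nd; omega
        rw [h3, Finset.sum_mul]
        ring
      have key2 : ∑ i ∈ range n, b (n - i) * φ i = ∑ h ∈ Icc 1 n, b h * φ (n - h) :=
        sum_range_reflect' (fun i h => b h * φ i) n
      have key3 : ∑ h ∈ Icc 1 n, b h * ∑ i ∈ range (n + 1 - h), φ i * φ (i + h)
          = (∑ h ∈ Icc 1 (n-1), b h * ∑ i ∈ range (n - h), φ i * φ (i + h))
            + ∑ h ∈ Icc 1 n, b h * (φ (n - h) * φ n) := by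
        have e1 : ∀ h ∈ Icc 1 n, b h * ∑ i ∈ range (n + 1 - h), φ i * φ (i + h)
            = b h * ∑ i ∈ range (n - h), φ i * φ (i + h) + b h * (φ (n - h) * φ n) := by
          intro h hh; simp only [mem_Icc] at hh
          have e2 : n + 1 - h = (n - h) + 1 := by omega
          rw [e2, Finset.sum_range_succ]
          have e3 : n - h + h = n := by omega
          rw [e3]; ring
        rw [Finset.sum_congr rfl e1, Finset.sum_add_distrib]
        congr 1
        refine (Finset.sum_subset (Finset.Icc_subset_Icc_right (by omega)) ?_).symm
        intro h hmem hnot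
        simp only [mem_Icc] at hmem hnot
        have : n - h = 0 := by omega
        rw [this]; simp
      rw [key1, ih, key2]
      rw [Finset.sum_range_succ (fun i => φ i ^ 2), Nat.add_sub_cancel, key3]
      rw [Finset.sum_mul]
      simp only [mul_assoc]
      ring

private lemma t_mono {k : ℕ} {t : ℕ → ℕ} (h : ∀ p < k, t p ≤ t (p+1)) :
    ∀ p q, p ≤ q → q ≤ k → t p ≤ t q := by
  intro p q hpq hqk
  induction q, hpq using Nat.le_induction with
  | base => exact le_refl _
  | succ q hq ih => exact le_trans (ih (by omega)) (h q (by omega))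

private lemma block_sum (f : ℕ → ℝ) : ∀ (k : ℕ) (t : ℕ → ℕ),
    (∀ p < k, t p ≤ t (p+1)) →
    ∑ p ∈ range k, ∑ i ∈ Finset.Ico (t p) (t (p+1)), f i
      = ∑ i ∈ Finset.Ico (t 0) (t k), f i := by
  intro k
  induction k with
  | zero => simp
  | succ k ih =>
    intro t hm
    rw [Finset.sum_range_succ, ih t (fun p hp => hm p (by omega))]
    exact Finset.sum_Ico_consecutive f (t_mono hm 0 k (by omega) (by omega))
      (hm k (by omega))

private lemma sum_const_Ico (s e : ℕ) (v : ℝ) :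
    ∑ _i ∈ Finset.Ico s e, v = ((e : ℝ) - s) * v ∨ e ≤ s := by
  by_cases h : s ≤ e
  · left
    rw [Finset.sum_const, Nat.card_Ico, nsmul_eq_mul, Nat.cast_sub h]
  · right; omega

private lemma fin_sum_eq (n : ℕ) (A : Matrix (Fin n) (Fin n) ℝ) (a : ℕ → ℝ)
    (hA : ∀ i j : Fin n, A i j = a (nd i.val j.val)) (θ : Fin n → ℝ) (φ : ℕ → ℝ)
    (hφ : ∀ i : Fin n, φ i.val = θ i) :
    ∑ i : Fin n, ∑ j : Fin n, θ i * A i j * θ j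
      = ∑ i ∈ range n, ∑ j ∈ range n, a (nd i j) * φ i * φ j := by
  rw [← Fin.sum_univ_eq_sum_range (fun i => ∑ j ∈ range n, a (nd i j) * φ i * φ j) n]
  apply Finset.sum_congr rfl
  intro i _
  rw [← Fin.sum_univ_eq_sum_range (fun j => a (nd i.val j) * φ i.val * φ j) n]
  apply Finset.sum_congr rfl
  intro j _
  rw [hA, hφ, hφ]; ring

private lemma f_rec (a : ℕ → ℝ) (m : ℕ) :
    ∑ i ∈ range (m+1), ∑ j ∈ range (m+1), a (nd i j)
      = (∑ i ∈ range m, ∑ j ∈ range m, a (nd i j)) + (a 0 + 2 * ∑ h ∈ Icc 1 m, a h) := by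
  simp only [Finset.sum_range_succ]
  rw [Finset.sum_add_distrib]
  have h1 : ∀ i ∈ range m, a (nd i m) = a (m - i) := by
    intro i hi; simp only [mem_range] at hi
    congr 1; unfold nd; omega
  have h2 : ∀ j ∈ range m, a (nd m j) = a (m - j) := by
    intro j hj; simp only [mem_range] at hj
    congr 1; unfold nd; omega
  have h3 : nd m m = 0 := by unfold nd; omega
  rw [Finset.sum_congr rfl h1, Finset.sum_congr rfl h2, h3,
    show (∑ i ∈ range m, a (m - i)) = ∑ h ∈ Icc 1 m, a h from
      sum_range_reflect' (fun _ h => a h) m]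
  ring

private lemma f_closed (a : ℕ → ℝ) (m : ℕ) :
    ∑ i ∈ range m, ∑ j ∈ range m, a (nd i j)
      = m * a 0 + 2 * ∑ h ∈ Icc 1 m, ((m:ℝ) - h) * a h := by
  induction m with
  | zero => simp
  | succ m ih =>
    rw [f_rec, ih, Finset.sum_Icc_succ_top (by omega : 1 ≤ m + 1)]
    have e : ∑ h ∈ Icc 1 m, ((m:ℝ) + 1 - h) * a h
        = ∑ h ∈ Icc 1 m, ((m:ℝ) - h) * a h + ∑ h ∈ Icc 1 m, a h := by
      rw [← Finset.sum_add_distrib]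
      exact Finset.sum_congr rfl fun h _ => by ring
    push_cast
    rw [e]
    ring

private lemma filter_range_lt (n m : ℕ) (hmn : m ≤ n) :
    (range n).filter (fun i => i < m) = range m := by
  ext i; simp only [mem_filter, mem_range]; omega

private lemma forward (n L : ℕ) (hL : 1 ≤ L) (hLn : 2 * L < n) (a : ℕ → ℝ)
    (hQ : ∀ m, L ≤ m → m + L ≤ n → ∑ i ∈ range m, ∑ j ∈ range m, a (nd i j) = 0)
    (hQn : ∑ i ∈ range n, ∑ j ∈ range n, a (nd i j) = 0) :
    a 0 + 2 * ∑ h ∈ Icc 1 L, a h = 0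
      ∧ ∑ h ∈ Icc 1 L, (h : ℝ) * a h = 0
      ∧ (∀ h : ℕ, L + 1 ≤ h → h ≤ n - L - 1 → a h = 0)
      ∧ ∑ i ∈ Icc 1 L, (i : ℝ) * a (n - i) = 0 := by
  have hf0 : ∀ m, L ≤ m → m + L ≤ n →
      (m:ℝ) * a 0 + 2 * ∑ h ∈ Icc 1 m, ((m:ℝ) - h) * a h = 0 := by
    intro m h1 h2; rw [← f_closed]; exact hQ m h1 h2
  have hg : ∀ m, L ≤ m → m + L + 1 ≤ n → a 0 + 2 * ∑ h ∈ Icc 1 m, a h = 0 := by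
    intro m h1 h2
    have e1 := hf0 m h1 (by omega)
    have e2 := hf0 (m+1) (by omega) (by omega)
    rw [Finset.sum_Icc_succ_top (by omega : 1 ≤ m + 1)] at e2
    have e : (∑ h ∈ Icc 1 m, (((m+1:ℕ):ℝ) - h) * a h)
        = (∑ h ∈ Icc 1 m, ((m:ℝ) - h) * a h) + ∑ h ∈ Icc 1 m, a h := by
      rw [← Finset.sum_add_distrib]
      refine Finset.sum_congr rfl fun h _ => by push_cast; ring
    rw [e] at e2
    have etop : (((m+1:ℕ):ℝ) - ((m+1:ℕ):ℝ)) * a (m+1) = 0 := by ring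
    rw [etop] at e2
    push_cast at e2
    linarith
  have ci : a 0 + 2 * ∑ h ∈ Icc 1 L, a h = 0 := hg L le_rfl (by omega)
  have cii : ∑ h ∈ Icc 1 L, (h:ℝ) * a h = 0 := by
    have h1 := hf0 L le_rfl (by omega)
    have e : ∑ h ∈ Icc 1 L, (h:ℝ) * a h
        = (L:ℝ) * ∑ h ∈ Icc 1 L, a h - ∑ h ∈ Icc 1 L, ((L:ℝ) - h) * a h := by
      rw [Finset.mul_sum, ← Finset.sum_sub_distrib]
      exact Finset.sum_congr rfl fun h _ => by ring
    rw [e]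
    linear_combination ((L:ℝ)/2) * ci - (1/2) * h1
  have ciii : ∀ h, L + 1 ≤ h → h ≤ n - L - 1 → a h = 0 := by
    intro h hh1 hh2
    obtain ⟨h', rfl⟩ : ∃ h', h = h' + 1 := ⟨h - 1, by omega⟩
    have g1 := hg (h'+1) (by omega) (by omega)
    have g2 := hg h' (by omega) (by omega)
    rw [Finset.sum_Icc_succ_top (by omega : 1 ≤ h' + 1)] at g1
    linarith
  refine ⟨ci, cii, ciii, ?_⟩
  have hfn : (n:ℝ) * a 0 + 2 * ∑ h ∈ Icc 1 n, ((n:ℝ) - h) * a h = 0 := by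
    rw [← f_closed]; exact hQn
  have hIcc : Icc 1 n = Finset.Ico 1 (n+1) := by
    rw [Finset.Ico_add_one_right_eq_Icc]
  rw [hIcc] at hfn
  have s1 : (∑ h ∈ Finset.Ico 1 (L+1), ((n:ℝ) - h) * a h)
        + ∑ h ∈ Finset.Ico (L+1) (n+1), ((n:ℝ) - h) * a h
      = ∑ h ∈ Finset.Ico 1 (n+1), ((n:ℝ) - h) * a h :=
    Finset.sum_Ico_consecutive _ (by omega) (by omega)
  have s2 : (∑ h ∈ Finset.Ico (L+1) (n-L), ((n:ℝ) - h) * a h)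
        + ∑ h ∈ Finset.Ico (n-L) (n+1), ((n:ℝ) - h) * a h
      = ∑ h ∈ Finset.Ico (L+1) (n+1), ((n:ℝ) - h) * a h :=
    Finset.sum_Ico_consecutive _ (by omega) (by omega)
  have mid : ∑ h ∈ Finset.Ico (L+1) (n-L), ((n:ℝ) - h) * a h = 0 :=
    Finset.sum_eq_zero fun h hh => by
      simp only [Finset.mem_Ico] at hh
      rw [ciii h (by omega) (by omega)]; ring
  have low : ∑ h ∈ Finset.Ico 1 (L+1), ((n:ℝ) - h) * a h
      = (n:ℝ) * ∑ h ∈ Icc 1 L, a h - ∑ h ∈ Icc 1 L, (h:ℝ) * a h := by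
    rw [Finset.Ico_add_one_right_eq_Icc, Finset.mul_sum, ← Finset.sum_sub_distrib]
    exact Finset.sum_congr rfl fun h _ => by ring
  have high : ∑ h ∈ Finset.Ico (n-L) (n+1), ((n:ℝ) - h) * a h
      = ∑ i ∈ Icc 1 L, (i:ℝ) * a (n - i) := by
    rw [Finset.sum_Ico_succ_top (by omega : n - L ≤ n)]
    have Fn0 : ((n:ℝ) - (n:ℕ)) * a n = 0 := by ring
    rw [Fn0, add_zero]
    apply Finset.sum_nbij' (fun h => n - h) (fun i => n - i)
    · intro h hh; simp only [Finset.mem_Ico] at hh; simp only [Finset.mem_Icc]; omega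
    · intro i hi; simp only [Finset.mem_Icc] at hi; simp only [Finset.mem_Ico]; omega
    · intro h hh; simp only [Finset.mem_Ico] at hh; omega
    · intro i hi; simp only [Finset.mem_Icc] at hi; omega
    · intro h hh; simp only [Finset.mem_Ico] at hh
      rw [show n - (n - h) = h from by omega, Nat.cast_sub (by omega : h ≤ n)]
  rw [← s1, ← s2, mid, low, high] at hfn
  linear_combination (1/2) * hfn - ((n:ℝ)/2) * ci + cii

private lemma backward (n L : ℕ) (hL : 1 ≤ L) (hLn : 2 * L < n) (a : ℕ → ℝ)
    (c1 : a 0 + 2 * ∑ h ∈ Icc 1 L, a h = 0)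
    (c2 : ∑ h ∈ Icc 1 L, (h : ℝ) * a h = 0)
    (c3 : ∀ h : ℕ, L + 1 ≤ h → h ≤ n - L - 1 → a h = 0)
    (c4 : ∑ i ∈ Icc 1 L, (i : ℝ) * a (n - i) = 0)
    (k : ℕ) (t : ℕ → ℕ) (c : ℕ → ℝ) (φ : ℕ → ℝ)
    (hk : 0 < k) (ht0 : t 0 = 0) (htk : t k = n)
    (hstep : ∀ j < k, t j + L ≤ t (j + 1))
    (hblock : ∀ p < k, ∀ i, t p ≤ i → i < t (p+1) → φ i = c p) :
    ∑ i ∈ range n, ∑ j ∈ range n, a (nd i j) * φ i * φ j = 0 := by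
  obtain ⟨K, rfl⟩ : ∃ K, k = K + 1 := ⟨k - 1, by omega⟩
  have hmt : ∀ p < K + 1, t p ≤ t (p+1) := fun p hp => by have := hstep p hp; omega
  have htK : t K + L ≤ n := by have := hstep K (by omega); omega
  have ht01 : t (0 + 1) = t 1 := rfl
  have ht1 : L ≤ t 1 := by have := hstep 0 (by omega); omega
  -- Step A : diagonal sum
  have stepA : ∑ i ∈ range n, φ i ^ 2
      = ∑ p ∈ range (K+1), ((t (p+1) - t p : ℕ) : ℝ) * c p ^ 2 := by
    have hr : Finset.range n = Finset.Ico (t 0) (t (K+1)) := by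
      rw [ht0, htk, Finset.range_eq_Ico]
    rw [hr, ← block_sum (fun i => φ i ^ 2) (K+1) t hmt]
    refine Finset.sum_congr rfl fun p hp => ?_
    simp only [mem_range] at hp
    have e : ∀ i ∈ Finset.Ico (t p) (t (p+1)), φ i ^ 2 = c p ^ 2 := by
      intro i hi; simp only [Finset.mem_Ico] at hi
      rw [hblock p hp i hi.1 hi.2]
    rw [Finset.sum_congr rfl e, Finset.sum_const, Nat.card_Ico, nsmul_eq_mul]
  -- far pairs
  have far : ∀ h, n - L ≤ h → h ≤ n - 1 →
      ∑ i ∈ range (n - h), φ i * φ (i + h) = ((n - h : ℕ) : ℝ) * (c 0 * c K) := by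
    intro h h1 h2
    have e : ∀ i ∈ range (n - h), φ i * φ (i + h) = c 0 * c K := by
      intro i hi; simp only [mem_range] at hi
      have f1 : φ i = c 0 := hblock 0 (by omega) i (by omega) (by omega)
      have f2 : φ (i + h) = c K := hblock K (by omega) (i+h) (by omega) (by omega)
      rw [f1, f2]
    rw [Finset.sum_congr rfl e, Finset.sum_const, Finset.card_range, nsmul_eq_mul]
  -- near pairs
  have near : ∀ h, 1 ≤ h → h ≤ L →
      ∑ i ∈ range (n - h), φ i * φ (i + h)
        = (∑ p ∈ range (K+1), (((t (p+1) - t p : ℕ) : ℝ) - h) * c p ^ 2)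
          + h * ∑ p ∈ range K, c p * c (p+1) := by
    intro h h1 h2
    have hm' : ∀ p < K + 1, (fun p => if p = K+1 then n - h else t p) p
        ≤ (fun p => if p = K+1 then n - h else t p) (p+1) := by
      intro p hp
      by_cases hpk : p + 1 = K + 1
      · simp only [if_neg (show ¬ p = K+1 from by omega), if_pos hpk]
        have : p = K := by omega
        subst this
        omega
      · simp only [if_neg (show ¬ p = K+1 from by omega), if_neg hpk]
        exact hmt p hp
    have key := block_sum (fun i => φ i * φ (i + h)) (K+1)
      (fun p => if p = K+1 then n - h else t p) hm'
    beta_reduce at key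
    rw [show (if (0:ℕ) = K+1 then n - h else t 0) = 0 from by rw [if_neg (by omega), ht0],
        show (if K+1 = K+1 then n - h else t (K+1)) = n - h from if_pos rfl,
        ← Finset.range_eq_Ico] at key
    rw [← key]
    have blockp : ∀ p ∈ range K,
        ∑ i ∈ Finset.Ico (if p = K+1 then n - h else t p)
            (if p+1 = K+1 then n - h else t (p+1)), φ i * φ (i + h)
          = ((((t (p+1) - t p : ℕ)) : ℝ) - h) * c p ^ 2 + (h:ℝ) * (c p * c (p+1)) := by
      intro p hp; simp only [mem_range] at hp
      rw [if_neg (show ¬ p = K+1 from by omega), if_neg (show ¬ p + 1 = K+1 from by omega)]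
      have hp1 := hstep p (by omega)
      have hp2 := hstep (p+1) (by omega)
      rw [← Finset.sum_Ico_consecutive (fun i => φ i * φ (i + h))
        (show t p ≤ t (p+1) - h from by omega) (show t (p+1) - h ≤ t (p+1) from by omega)]
      have e1 : ∀ i ∈ Finset.Ico (t p) (t (p+1) - h), φ i * φ (i + h) = c p * c p := by
        intro i hi; simp only [Finset.mem_Ico] at hi
        rw [hblock p (by omega) i (by omega) (by omega),
            hblock p (by omega) (i+h) (by omega) (by omega)]
      have e2 : ∀ i ∈ Finset.Ico (t (p+1) - h) (t (p+1)), φ i * φ (i + h) = c p * c (p+1) := by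
        intro i hi; simp only [Finset.mem_Ico] at hi
        rw [hblock p (by omega) i (by omega) (by omega),
            hblock (p+1) (by omega) (i+h) (by omega) (by omega)]
      rw [Finset.sum_congr rfl e1, Finset.sum_congr rfl e2, Finset.sum_const,
        Finset.sum_const, Nat.card_Ico, Nat.card_Ico, nsmul_eq_mul, nsmul_eq_mul]
      rw [show t (p+1) - (t (p+1) - h) = h from by omega,
          show t (p+1) - h - t p = t (p+1) - t p - h from by omega,
          Nat.cast_sub (show h ≤ t (p+1) - t p from by omega)]
      ring
    have blockK : ∑ i ∈ Finset.Ico (if K = K+1 then n - h else t K)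
          (if K+1 = K+1 then n - h else t (K+1)), φ i * φ (i + h)
        = ((((t (K+1) - t K : ℕ)) : ℝ) - h) * c K ^ 2 := by
      rw [if_neg (show ¬ K = K+1 from by omega), if_pos rfl]
      have e1 : ∀ i ∈ Finset.Ico (t K) (n - h), φ i * φ (i + h) = c K * c K := by
        intro i hi; simp only [Finset.mem_Ico] at hi
        rw [hblock K (by omega) i (by omega) (by omega),
            hblock K (by omega) (i+h) (by omega) (by omega)]
      rw [Finset.sum_congr rfl e1, Finset.sum_const, Nat.card_Ico, nsmul_eq_mul]
      rw [show n - h - t K = t (K+1) - t K - h from by omega,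
          Nat.cast_sub (show h ≤ t (K+1) - t K from by omega)]
      ring
    rw [Finset.sum_range_succ, Finset.sum_congr rfl blockp, blockK,
      Finset.sum_range_succ (fun p => (((t (p+1) - t p : ℕ) : ℝ) - h) * c p ^ 2),
      Finset.sum_add_distrib, Finset.mul_sum]
    ring
  -- assemble
  rw [quad_decomp, stepA]
  rw [show Icc 1 (n-1) = Finset.Ico 1 n from by
    ext x; simp only [Finset.mem_Icc, Finset.mem_Ico]; omega]
  rw [← Finset.sum_Ico_consecutive (fun h => a h * ∑ i ∈ range (n - h), φ i * φ (i + h))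
    (show 1 ≤ L+1 from by omega) (show L+1 ≤ n from by omega)]
  rw [← Finset.sum_Ico_consecutive (fun h => a h * ∑ i ∈ range (n - h), φ i * φ (i + h))
    (show L+1 ≤ n-L from by omega) (show n-L ≤ n from by omega)]
  have mid : ∑ h ∈ Finset.Ico (L+1) (n-L), a h * ∑ i ∈ range (n - h), φ i * φ (i + h) = 0 :=
    Finset.sum_eq_zero fun h hh => by
      simp only [Finset.mem_Ico] at hh
      rw [c3 h (by omega) (by omega), zero_mul]
  have low : ∑ h ∈ Finset.Ico 1 (L+1), a h * ∑ i ∈ range (n - h), φ i * φ (i + h)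
      = (∑ h ∈ Icc 1 L, a h) * (∑ p ∈ range (K+1), ((t (p+1) - t p : ℕ) : ℝ) * c p ^ 2)
        + (∑ h ∈ Icc 1 L, (h:ℝ) * a h)
          * ((∑ p ∈ range K, c p * c (p+1)) - ∑ p ∈ range (K+1), c p ^ 2) := by
    rw [Finset.Ico_add_one_right_eq_Icc]
    have e : ∀ h ∈ Icc 1 L, a h * ∑ i ∈ range (n - h), φ i * φ (i + h)
        = a h * (∑ p ∈ range (K+1), ((t (p+1) - t p : ℕ) : ℝ) * c p ^ 2)
          + ((h:ℝ) * a h)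
            * ((∑ p ∈ range K, c p * c (p+1)) - ∑ p ∈ range (K+1), c p ^ 2) := by
      intro h hh; simp only [Finset.mem_Icc] at hh
      rw [near h hh.1 hh.2]
      have esub : ∑ p ∈ range (K+1), (((t (p+1) - t p : ℕ) : ℝ) - h) * c p ^ 2
          = (∑ p ∈ range (K+1), ((t (p+1) - t p : ℕ) : ℝ) * c p ^ 2)
            - (h:ℝ) * ∑ p ∈ range (K+1), c p ^ 2 := by
        rw [Finset.mul_sum, ← Finset.sum_sub_distrib]
        exact Finset.sum_congr rfl fun p _ => by ring
      rw [esub]; ring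
    rw [Finset.sum_congr rfl e, Finset.sum_add_distrib, ← Finset.sum_mul, ← Finset.sum_mul]
  have high : ∑ h ∈ Finset.Ico (n-L) n, a h * ∑ i ∈ range (n - h), φ i * φ (i + h)
      = (∑ i ∈ Icc 1 L, (i:ℝ) * a (n - i)) * (c 0 * c K) := by
    have e : ∀ h ∈ Finset.Ico (n-L) n, a h * ∑ i ∈ range (n - h), φ i * φ (i + h)
        = (((n - h : ℕ) : ℝ) * a h) * (c 0 * c K) := by
      intro h hh; simp only [Finset.mem_Ico] at hh
      rw [far h (by omega) (by omega)]; ring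
    rw [Finset.sum_congr rfl e, ← Finset.sum_mul]
    congr 1
    apply Finset.sum_nbij' (fun h => n - h) (fun i => n - i)
    · intro h hh; simp only [Finset.mem_Ico] at hh; simp only [Finset.mem_Icc]; omega
    · intro i hi; simp only [Finset.mem_Icc] at hi; simp only [Finset.mem_Ico]; omega
    · intro h hh; simp only [Finset.mem_Ico] at hh; omega
    · intro i hi; simp only [Finset.mem_Icc] at hi; omega
    · intro h hh; simp only [Finset.mem_Ico] at hh
      rw [show n - (n - h) = h from by omega]
  rw [mid, low, high, c2, c4]
  linear_combination (∑ p ∈ range (K+1), ((t (p+1) - t p : ℕ) : ℝ) * c p ^ 2) * c1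

/-- For a symmetric Toeplitz matrix `A` with entries `a_{|i-j|}` and
`1 ≤ L < n/2`, the quadratic form `θᵀAθ` vanishes for every `θ ∈ Θ_L` if and only if
the four linear conditions on the coefficients hold. -/
theorem stmt_1
    (n L : ℕ) (hL : 1 ≤ L) (hLn : 2 * L < n)
    (a : ℕ → ℝ) (A : Matrix (Fin n) (Fin n) ℝ)
    (hA : ∀ i j : Fin n, A i j = a ((i.val : ℤ) - (j.val : ℤ)).natAbs) :
    (∀ θ ∈ ThetaSet n L, ∑ i : Fin n, ∑ j : Fin n, θ i * A i j * θ j = 0)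
      ↔ (a 0 + 2 * ∑ h ∈ Finset.Icc 1 L, a h = 0
          ∧ ∑ h ∈ Finset.Icc 1 L, (h : ℝ) * a h = 0
          ∧ (∀ h : ℕ, L + 1 ≤ h → h ≤ n - L - 1 → a h = 0)
          ∧ ∑ i ∈ Finset.Icc 1 L, (i : ℝ) * a (n - i) = 0) := by
  have hA' : ∀ i j : Fin n, A i j = a (nd i.val j.val) := hA
  constructor
  · intro hQ
    apply forward n L hL hLn a
    · -- step test vectors
      intro m hm1 hm2
      have mem : (fun i : Fin n => if i.val < m then (1:ℝ) else 0) ∈ ThetaSet n L := by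
        refine ⟨2, fun j => if j = 0 then 0 else if j = 1 then m else n,
          fun j => if j = 0 then (1:ℝ) else 0, by norm_num, by norm_num, by norm_num, ?_, ?_⟩
        · intro j hj
          interval_cases j
          · norm_num; omega
          · norm_num; omega
        · intro j hj i hi1 hi2
          interval_cases j
          · norm_num at hi2 ⊢
            omega
          · norm_num at hi1 ⊢
            omega
      have hz := hQ _ mem
      rw [fin_sum_eq n A a hA' _ (fun i => if i < m then (1:ℝ) else 0) (fun i => rfl)] at hz
      have eq1 : ∑ i ∈ Finset.range m, ∑ j ∈ Finset.range m, a (nd i j)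
          = ∑ i ∈ Finset.range n, ∑ j ∈ Finset.range n,
              a (nd i j) * (if i < m then (1:ℝ) else 0) * (if j < m then (1:ℝ) else 0) := by
        calc ∑ i ∈ Finset.range m, ∑ j ∈ Finset.range m, a (nd i j)
            = ∑ i ∈ Finset.range m, ∑ j ∈ Finset.range n,
                a (nd i j) * (if i < m then (1:ℝ) else 0) * (if j < m then (1:ℝ) else 0) := by
              refine Finset.sum_congr rfl fun i hi => ?_
              simp only [Finset.mem_range] at hi
              calc ∑ j ∈ Finset.range m, a (nd i j)
                  = ∑ j ∈ Finset.range m,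
                      a (nd i j) * (if i < m then (1:ℝ) else 0) * (if j < m then (1:ℝ) else 0) := by
                    refine Finset.sum_congr rfl fun j hj => ?_
                    simp only [Finset.mem_range] at hj
                    rw [if_pos hi, if_pos hj]; ring
                _ = ∑ j ∈ Finset.range n,
                      a (nd i j) * (if i < m then (1:ℝ) else 0) * (if j < m then (1:ℝ) else 0) := by
                    refine Finset.sum_subset (Finset.range_subset_range.mpr (by omega)) fun j _ hj => ?_
                    simp only [Finset.mem_range] at hj
                    rw [if_neg (show ¬ j < m from by omega)]; ring
          _ = _ := by
              refine Finset.sum_subset (Finset.range_subset_range.mpr (by omega)) fun i _ hi => ?_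
              simp only [Finset.mem_range] at hi
              refine Finset.sum_eq_zero fun j _ => ?_
              rw [if_neg (by omega : ¬ i < m)]; ring
      rw [eq1]; exact hz
    · -- constant test vector
      have mem1 : (fun _ : Fin n => (1:ℝ)) ∈ ThetaSet n L := by
        refine ⟨1, fun j => if j = 0 then 0 else n, fun _ => 1, by norm_num, by norm_num,
          by norm_num, ?_, fun j hj i _ _ => rfl⟩
        intro j hj
        interval_cases j
        norm_num; omega
      have hz := hQ _ mem1
      rw [fin_sum_eq n A a hA' _ (fun _ => (1:ℝ)) (fun i => rfl)] at hz
      rw [← hz]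
      refine Finset.sum_congr rfl fun i _ => Finset.sum_congr rfl fun j _ => by ring
  · rintro ⟨c1, c2, c3, c4⟩ θ hmem
    simp only [ThetaSet, Set.mem_setOf_eq] at hmem
    obtain ⟨k, t, c, hk, ht0, htk, hstep, hval⟩ := hmem
    have hφ : ∀ i : Fin n,
        (fun i => if hi : i < n then θ ⟨i, hi⟩ else 0) i.val = θ i := by
      intro i; simp [i.isLt]
    rw [fin_sum_eq n A a hA' θ (fun i => if hi : i < n then θ ⟨i, hi⟩ else 0) hφ]
    apply backward n L hL hLn a c1 c2 c3 c4 k t c _ hk ht0 htk hstep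
    intro p hp i h1 h2
    have hin : i < n := by
      have := t_mono (k := k) (t := t) (fun q hq => by have := hstep q hq; omega) (p+1) k (by omega) (le_refl k)
      omega
    rw [dif_pos hin]
    exact hval p hp ⟨i, hin⟩ h1 h2
end

section
/- Let n and L be integers with 1 ≤ L < n/2, and let A be an n×n real symmetric Toeplitz matrix with entries A_{ij} = a_{|i-j|} satisfying: a_0 + 2a_1 + ⋯ + 2a_L = 0; a_1 + 2a_2 + ⋯ + L·a_L = 0; a_{L+1} = ⋯ = a_{n-L-1} = 0; and L·a_{n-L} + (L−1)·a_{n-L+1} + ⋯ + a_{n-1} = 0. Then the quadratic form x ↦ xᵀAx satisfies (x + c·𝟙)ᵀA(x + c·𝟙) = xᵀAx for all x ∈ ℝⁿ and all c ∈ ℝ if and only if a_i = a_{n-i} for every i = 1, …, L (equivalently, A is a circulant matrix with first row (a_0, a_1, …, a_L, 0, …, 0, a_L, …, a_2, a_1)). -/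
open Finset

/-- For a symmetric Toeplitz matrix `A` satisfying the four conditions of
Theorem 1, the quadratic form `x ↦ xᵀAx` is invariant under a global mean shift
`x ↦ x + c·𝟙` if and only if `a_i = a_{n-i}` for `i = 1, …, L`. -/
theorem stmt_2
    (n L : ℕ) (hL : 1 ≤ L) (hLn : 2 * L < n)
    (a : ℕ → ℝ) (A : Matrix (Fin n) (Fin n) ℝ)
    (hA : ∀ i j : Fin n, A i j = a ((i.val : ℤ) - (j.val : ℤ)).natAbs)
    (h1 : a 0 + 2 * ∑ h ∈ Finset.Icc 1 L, a h = 0)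
    (h2 : ∑ h ∈ Finset.Icc 1 L, (h : ℝ) * a h = 0)
    (h3 : ∀ h : ℕ, L + 1 ≤ h → h ≤ n - L - 1 → a h = 0)
    (h4 : ∑ i ∈ Finset.Icc 1 L, (i : ℝ) * a (n - i) = 0) :
    (∀ (x : Fin n → ℝ) (c : ℝ),
        ∑ i : Fin n, ∑ j : Fin n, (x i + c) * A i j * (x j + c)
          = ∑ i : Fin n, ∑ j : Fin n, x i * A i j * x j)
      ↔ (∀ i : ℕ, 1 ≤ i → i ≤ L → a i = a (n - i)) := by
  have hIcc : ∀ (f : ℕ → ℝ) (m : ℕ), ∑ h ∈ Icc 1 m, f h = ∑ h ∈ range m, f (h+1) := by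
    intro f m
    rw [← Finset.Ico_add_one_right_eq_Icc, Finset.sum_Ico_eq_sum_range]
    simp [add_comm]
  have h1' : a 0 + 2 * ∑ h ∈ range L, a (h+1) = 0 := by rw [← hIcc]; exact h1
  set R : ℕ → ℝ := fun i => a 0 + ∑ h ∈ range i, a (h+1) + ∑ h ∈ range (n-1-i), a (h+1)
    with hR
  -- Step A : row sums
  have stepA : ∀ i : Fin n, ∑ j : Fin n, A i j = R i.val := by
    intro i
    have hi := i.isLt
    calc ∑ j : Fin n, A i j
        = ∑ j : Fin n, a (((i.val : ℤ) - ((j : Fin n).val : ℤ)).natAbs) := by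
          exact Finset.sum_congr rfl fun j _ => hA i j
      _ = ∑ j ∈ range n, a (((i.val : ℤ) - (j : ℤ)).natAbs) :=
          Fin.sum_univ_eq_sum_range (fun j => a (((i.val : ℤ) - (j : ℤ)).natAbs)) n
      _ = ∑ j ∈ range (i.val + 1), a (((i.val : ℤ) - (j : ℤ)).natAbs)
          + ∑ j ∈ Ico (i.val + 1) n, a (((i.val : ℤ) - (j : ℤ)).natAbs) :=
          (Finset.sum_range_add_sum_Ico _ (by omega)).symm
      _ = R i.val := by
          have e1 : ∑ j ∈ range (i.val + 1), a (((i.val : ℤ) - (j : ℤ)).natAbs)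
              = a 0 + ∑ h ∈ range i.val, a (h+1) := by
            have : ∀ j ∈ range (i.val + 1), a (((i.val : ℤ) - (j : ℤ)).natAbs)
                = a (i.val + 1 - 1 - j) := by
              intro j hj; simp only [mem_range] at hj; congr 1; omega
            rw [Finset.sum_congr rfl this, Finset.sum_range_reflect (fun h => a h) (i.val+1),
              Finset.sum_range_succ' (fun h => a h) i.val]
            ring
          have e2 : ∑ j ∈ Ico (i.val + 1) n, a (((i.val : ℤ) - (j : ℤ)).natAbs)
              = ∑ h ∈ range (n - 1 - i.val), a (h+1) := by
            rw [Finset.sum_Ico_eq_sum_range]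
            refine Finset.sum_congr (by congr 1; omega) fun j hj => ?_
            simp only [mem_range] at hj
            congr 1; omega
          rw [e1, e2, hR]
  -- middle-range sums collapse to L terms
  have Lmid : ∀ m, L ≤ m → m ≤ n - 1 - L → ∑ h ∈ range m, a (h+1) = ∑ h ∈ range L, a (h+1) := by
    intro m hLm hmn
    rw [← Finset.sum_range_add_sum_Ico (fun h => a (h+1)) hLm]
    have : ∑ h ∈ Ico L m, a (h+1) = 0 := by
      refine Finset.sum_eq_zero fun h hh => ?_
      simp only [mem_Ico] at hh
      exact h3 (h+1) (by omega) (by omega)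
    rw [this, add_zero]
  -- Step B : value of R for low rows
  have stepB : ∀ i : ℕ, i ≤ L → R i = ∑ k ∈ Icc (i+1) L, (a (n-k) - a k) := by
    intro i hi
    have e1 : ∑ h ∈ range (n-1-i), a (h+1)
        = ∑ h ∈ range (n-1-L), a (h+1) + ∑ h ∈ Ico (n-1-L) (n-1-i), a (h+1) :=
      (Finset.sum_range_add_sum_Ico _ (by omega)).symm
    have e2 : ∑ h ∈ range (n-1-L), a (h+1) = ∑ h ∈ range L, a (h+1) :=
      Lmid _ (by omega) (by omega)
    have e3 : ∑ h ∈ Ico (n-1-L) (n-1-i), a (h+1) = ∑ k ∈ Icc (i+1) L, a (n-k) := by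
      refine Finset.sum_nbij' (fun h => n-1-h) (fun k => n-1-k) ?_ ?_ ?_ ?_ ?_
      · intro h hh; simp only [mem_Ico] at hh; simp only [mem_Icc]; omega
      · intro k hk; simp only [mem_Icc] at hk; simp only [mem_Ico]; omega
      · intro h hh; simp only [mem_Ico] at hh; omega
      · intro k hk; simp only [mem_Icc] at hk; omega
      · intro h hh; simp only [mem_Ico] at hh; congr 1; omega
    have e4 : ∑ h ∈ range i, a (h+1)
        = ∑ h ∈ range L, a (h+1) - ∑ h ∈ Ico i L, a (h+1) := by
      have := Finset.sum_range_add_sum_Ico (fun h => a (h+1)) hi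
      linarith
    have e5 : ∑ h ∈ Ico i L, a (h+1) = ∑ k ∈ Icc (i+1) L, a k := by
      refine Finset.sum_nbij' (fun h => h+1) (fun k => k-1) ?_ ?_ ?_ ?_ ?_
      · intro h hh; simp only [mem_Ico] at hh; simp only [mem_Icc]; omega
      · intro k hk; simp only [mem_Icc] at hk; simp only [mem_Ico]; omega
      · intro h hh; omega
      · intro k hk; simp only [mem_Icc] at hk; omega
      · intro h hh; rfl
    rw [hR]
    simp only []
    rw [e1, e2, e3, e4, e5, Finset.sum_sub_distrib]
    linarith
  -- Step C : middle rows are zero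
  have stepC : ∀ i : ℕ, L ≤ i → i ≤ n - 1 - L → R i = 0 := by
    intro i hi1 hi2
    rw [hR]
    simp only []
    rw [Lmid i hi1 hi2, Lmid (n-1-i) (by omega) (by omega)]
    linarith
  -- symmetry of R
  have Rsym : ∀ i : ℕ, i ≤ n - 1 → R i = R (n-1-i) := by
    intro i hi
    rw [hR]
    simp only []
    rw [show n-1-(n-1-i) = i by omega]
    ring
  -- expansion of the quadratic form
  have hAs : ∀ i j : Fin n, A i j = A j i := by
    intro i j; rw [hA, hA]; congr 1; omega
  have key : ∀ (x : Fin n → ℝ) (c : ℝ),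
      ∑ i : Fin n, ∑ j : Fin n, (x i + c) * A i j * (x j + c)
        = (∑ i : Fin n, ∑ j : Fin n, x i * A i j * x j)
          + c * (∑ i : Fin n, x i * R i.val) + c * (∑ i : Fin n, x i * R i.val)
          + c^2 * (∑ i : Fin n, R i.val) := by
    intro x c
    have t2 : ∑ i : Fin n, ∑ j : Fin n, x i * A i j = ∑ i : Fin n, x i * R i.val := by
      refine Finset.sum_congr rfl fun i _ => ?_
      rw [← Finset.mul_sum, stepA]
    have t3 : ∑ i : Fin n, ∑ j : Fin n, A i j * x j = ∑ i : Fin n, x i * R i.val := by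
      rw [Finset.sum_comm]
      refine Finset.sum_congr rfl fun j _ => ?_
      rw [← Finset.sum_mul, Finset.sum_congr rfl fun i (_ : i ∈ univ) => hAs i j, stepA,
        mul_comm]
    have t4 : ∑ i : Fin n, ∑ j : Fin n, A i j = ∑ i : Fin n, R i.val :=
      Finset.sum_congr rfl fun i _ => stepA i
    calc ∑ i : Fin n, ∑ j : Fin n, (x i + c) * A i j * (x j + c)
        = ∑ i : Fin n, ∑ j : Fin n,
            (x i * A i j * x j + c * (x i * A i j) + c * (A i j * x j) + c^2 * A i j) := by
          exact Finset.sum_congr rfl fun i _ => Finset.sum_congr rfl fun j _ => by ring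
      _ = (∑ i : Fin n, ∑ j : Fin n, x i * A i j * x j)
          + c * (∑ i : Fin n, ∑ j : Fin n, x i * A i j)
          + c * (∑ i : Fin n, ∑ j : Fin n, A i j * x j)
          + c^2 * (∑ i : Fin n, ∑ j : Fin n, A i j) := by
          simp [Finset.sum_add_distrib, Finset.mul_sum]
      _ = _ := by rw [t2, t3, t4]
  constructor
  · -- invariance → symmetry
    intro hinv i hi1 hi2
    have hRzero : ∀ k : Fin n, R k.val = 0 := by
      intro k
      have e1 := hinv (fun j => if j = k then 1 else 0) 1
      have e2 := hinv (fun j => if j = k then 1 else 0) (-1)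
      rw [key] at e1 e2
      have hx : ∑ i : Fin n, (if i = k then (1:ℝ) else 0) * R i.val = R k.val := by
        simp
      rw [hx] at e1 e2
      nlinarith [e1, e2]
    have hiL : i < n := by omega
    have hi1n : i - 1 < n := by omega
    have r1 : R (i-1) = (a (n-i) - a i) + ∑ k ∈ Icc (i+1) L, (a (n-k) - a k) := by
      rw [stepB (i-1) (by omega), show (i-1)+1 = i by omega,
        show Icc i L = insert i (Icc (i+1) L) by ext y; simp [mem_Icc]; omega,
        Finset.sum_insert (by simp [mem_Icc])]
    have r2 : R i = ∑ k ∈ Icc (i+1) L, (a (n-k) - a k) := stepB i hi2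
    have z1 : R (i-1) = 0 := hRzero ⟨i-1, hi1n⟩
    have z2 : R i = 0 := hRzero ⟨i, hiL⟩
    have : a (n-i) - a i = 0 := by rw [z1, r2.symm.trans z2] at r1; linarith
    linarith
  · -- symmetry → invariance
    intro hsym x c
    have hRall : ∀ i : ℕ, i < n → R i = 0 := by
      intro i hi
      by_cases hc1 : i ≤ L
      · rw [stepB i hc1]
        refine Finset.sum_eq_zero fun k hk => ?_
        simp only [mem_Icc] at hk
        rw [hsym k (by omega) hk.2]; ring
      · by_cases hc2 : i ≤ n - 1 - L
        · exact stepC i (by omega) hc2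
        · rw [Rsym i (by omega), stepB (n-1-i) (by omega)]
          refine Finset.sum_eq_zero fun k hk => ?_
          simp only [mem_Icc] at hk
          rw [hsym k (by omega) hk.2]; ring
    rw [key]
    have hz : ∀ i : Fin n, R i.val = 0 := fun i => hRall i.val i.isLt
    simp [hz]
end

section
/- Let n, L be integers with 1 ≤ L < n/2 and let A ∈ 𝒜_L be the circulant symmetric matrix with first row (a_0, a_1, …, a_L, 0, …, 0, a_L, …, a_2, a_1), where a_0 + 2(a_1 + ⋯ + a_L) = 0 and a_1 + 2a_2 + ⋯ + L·a_L = 0. Let X = θ + ε with θ ∈ Θ_L deterministic and ε a random vector with E[ε_i] = 0, E[ε_i²] < ∞, and Cov(ε_i, ε_j) = γ_{|i-j|}. Then E[XᵀAX] = n·a_0·γ_0 + 2·Σ_{h=1}^{L} (n−h)·a_h·γ_h + 2·Σ_{h=1}^{L} h·a_h·γ_{n-h}. Moreover, a_0 = 0 if and only if a_1 + a_2 + ⋯ + a_L = 0, so the coefficient of γ_0 in E[XᵀAX] vanishes exactly when a_1 + ⋯ + a_L = 0. -/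
/-!
Taking expectations, `E[XᵀAX] = θᵀAθ + ∑ᵢⱼ A i j γ_{|i-j|}`. Because `A` is circulant and
symmetric, both double sums collapse to the cyclic lag sums `∑ᵢ F i (i + h)`, `0 ≤ h ≤ L`, weighted
by `a 0` and `2 a h`. The lag-`h` sum of `γ_{|i-j|}` meets `γ_h` for `n - h` indices and `γ_{n-h}`
for the `h` indices that wrap around. For `θ ∈ Θ_L`, any cyclic window of length `h ≤ L` contains
at most one jump of `θ`, so `∑ᵢ (θ_{i+h} - θᵢ)² = h ∑ᵢ (θ_{i+1} - θᵢ)²`; expanding the square,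
`∑ᵢ θᵢ θ_{i+h} = ‖θ‖² - (h/2) ‖Δθ‖²`, and the two linear constraints on `a` make `θᵀAθ` vanish.
-/

open MeasureTheory Finset

open Fin.NatCast Fin.CommRing

section QuadraticForm

variable {Ω ι : Type*} [MeasurableSpace Ω] [Fintype ι]

theorem integral_quadratic_form_add (μ : Measure Ω) [IsProbabilityMeasure μ]
    (A : Matrix ι ι ℝ) (θ : ι → ℝ) (ε : ι → Ω → ℝ) (hint : ∀ i, Integrable (ε i) μ)
    (hint2 : ∀ i j, Integrable (fun ω => ε i ω * ε j ω) μ) (hmean : ∀ i, ∫ ω, ε i ω ∂μ = 0) :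
    ∫ ω, ∑ i, ∑ j, (θ i + ε i ω) * A i j * (θ j + ε j ω) ∂μ
      = ∑ i, ∑ j, A i j * (θ i * θ j) + ∑ i, ∑ j, A i j * ∫ ω, ε i ω * ε j ω ∂μ := by
  have expand : ∀ i j, (fun ω => (θ i + ε i ω) * A i j * (θ j + ε j ω)) = fun ω =>
      A i j * (θ i * θ j) + A i j * θ i * ε j ω + A i j * θ j * ε i ω
        + A i j * (ε i ω * ε j ω) :=
    fun i j => funext fun ω => by ring
  have hterm : ∀ i j, Integrable (fun ω => (θ i + ε i ω) * A i j * (θ j + ε j ω)) μ := by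
    intro i j
    have := hint i; have := hint j; have := hint2 i j
    rw [expand]
    fun_prop
  have hterm_integral : ∀ i j, ∫ ω, (θ i + ε i ω) * A i j * (θ j + ε j ω) ∂μ
      = A i j * (θ i * θ j) + A i j * ∫ ω, ε i ω * ε j ω ∂μ := by
    intro i j
    have := hint i; have := hint j; have := hint2 i j
    rw [expand, integral_add (by fun_prop) (by fun_prop), integral_add (by fun_prop) (by fun_prop),
      integral_add (by fun_prop) (by fun_prop)]
    simp [integral_const_mul, hmean]
  rw [integral_finsetSum _ fun i _ => integrable_finsetSum _ fun j _ => hterm i j,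
    ← sum_add_distrib]
  refine sum_congr rfl fun i _ => ?_
  rw [integral_finsetSum _ fun j _ => hterm i j, ← sum_add_distrib]
  exact sum_congr rfl fun j _ => hterm_integral i j

end QuadraticForm

/-- The `m`-th entry of the first row `(a 0, …, a L, 0, …, 0, a L, …, a 1)` of a matrix in `𝒜_L`. -/
def bandCoeff (n L : ℕ) (a : ℕ → ℝ) (m : ℕ) : ℝ :=
  if m ≤ L then a m else if n - L ≤ m then a (n - m) else 0

theorem sum_range_bandCoeff_mul {n L : ℕ} (hLn : 2 * L < n) (a g : ℕ → ℝ) :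
    ∑ d ∈ range n, bandCoeff n L a d * g d
      = a 0 * g 0 + ∑ h ∈ Icc 1 L, a h * (g h + g (n - h)) := by
  set f := fun d => bandCoeff n L a d * g d
  have low : ∑ d ∈ Ico 1 (L + 1), f d = ∑ h ∈ Icc 1 L, a h * g h := by
    rw [← Ico_add_one_right_eq_Icc]
    refine sum_congr rfl fun h hh => ?_
    rw [mem_Ico] at hh
    simp only [f, bandCoeff, if_pos (by omega : h ≤ L)]
  have mid : ∑ d ∈ Ico (L + 1) (n - L), f d = 0 :=
    sum_eq_zero fun d hd => by
      rw [mem_Ico] at hd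
      simp only [f, bandCoeff, if_neg (by omega : ¬d ≤ L), if_neg (by omega : ¬n - L ≤ d), zero_mul]
  have high : ∑ d ∈ Ico (n - L) n, f d = ∑ h ∈ Icc 1 L, a h * g (n - h) := by
    have reflect := sum_Ico_reflect f 1 (m := L + 1) (n := n) (by omega)
    rw [show n + 1 - (L + 1) = n - L by omega, Nat.add_sub_cancel] at reflect
    rw [← reflect, ← Ico_add_one_right_eq_Icc]
    refine sum_congr rfl fun h hh => ?_
    rw [mem_Ico] at hh
    simp only [f, bandCoeff, if_neg (by omega : ¬n - h ≤ L), if_pos (by omega : n - L ≤ n - h),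
      Nat.sub_sub_self (by omega : h ≤ n)]
  rw [sum_range_eq_add_Ico f (by omega),
    ← sum_Ico_consecutive f (by omega : 1 ≤ n - L) (by omega : n - L ≤ n),
    ← sum_Ico_consecutive f (by omega : 1 ≤ L + 1) (by omega : L + 1 ≤ n - L), low, mid, high]
  simp only [f, bandCoeff, if_pos (Nat.zero_le L), mul_add, sum_add_distrib]
  ring

theorem sq_sum_of_pairwise_mul_eq_zero {R α : Type*} [CommSemiring R] (s : Finset α) (x : α → R)
    (h : (s : Set α).Pairwise fun a b => x a * x b = 0) :
    (∑ a ∈ s, x a) ^ 2 = ∑ a ∈ s, x a ^ 2 := by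
  rw [sq, sum_mul_sum]
  refine sum_congr rfl fun a ha => ?_
  rw [sum_eq_single_of_mem a ha fun b hb hba => h ha hb hba.symm, sq]

theorem add_le_of_forall_add_le_succ {k L : ℕ} {t : ℕ → ℕ} (hstep : ∀ j < k, t j + L ≤ t (j + 1))
    {a b : ℕ} (hab : a < b) (hb : b ≤ k) : t a + L ≤ t b := by
  induction b, hab using Nat.le_induction with
  | base => exact hstep a (by omega)
  | succ b hab ih =>
    have := hstep b (by omega)
    have := ih (by omega)
    omega

theorem exists_le_lt_succ {k x : ℕ} {t : ℕ → ℕ} (h0 : t 0 ≤ x) (hk : x < t k) :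
    ∃ j < k, t j ≤ x ∧ x < t (j + 1) := by
  induction k with
  | zero => omega
  | succ k ih =>
    by_cases hx : x < t k
    · obtain ⟨j, hj, hjx⟩ := ih hx
      exact ⟨j, by omega, hjx⟩
    · exact ⟨k, by omega, by omega, hk⟩

section Cyclic

variable {n : ℕ} [NeZero n]

def lagSum (F : Fin n → Fin n → ℝ) (h : ℕ) : ℝ :=
  ∑ i, F i (i + h)

theorem sum_mul_eq_sum_range_lagSum (c : ℕ → ℝ) (A : Matrix (Fin n) (Fin n) ℝ)
    (hA : ∀ i j : Fin n, A i j = c ((j.val + n - i.val) % n)) (F : Fin n → Fin n → ℝ) :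
    ∑ i, ∑ j, A i j * F i j = ∑ d ∈ range n, c d * lagSum F d := by
  have hA' : ∀ i d : Fin n, A i (i + d) = c d := fun i d => by
    rw [hA, show ((i + d).val + n - i.val) % n = (i + d - i).val by
        rw [Fin.val_sub, Nat.add_sub_assoc i.isLt.le, add_comm],
      add_sub_cancel_left]
  calc ∑ i, ∑ j, A i j * F i j = ∑ i, ∑ d : Fin n, A i (i + d) * F i (i + d) :=
        sum_congr rfl fun i _ => (Equiv.sum_comp (Equiv.addLeft i) _).symm
    _ = ∑ d : Fin n, c d * lagSum F d := by
        rw [sum_comm]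
        simp only [hA', lagSum, mul_sum, Fin.cast_val_eq_self]
    _ = ∑ d ∈ range n, c d * lagSum F d :=
        Fin.sum_univ_eq_sum_range (fun d => c d * lagSum F d) n

theorem lagSum_sub_eq {F : Fin n → Fin n → ℝ} (hF : ∀ i j, F i j = F j i) {h : ℕ} (hh : h ≤ n) :
    lagSum F (n - h) = lagSum F h := by
  rw [lagSum, Nat.cast_sub hh, Fin.natCast_self, zero_sub,
    ← Equiv.sum_comp (Equiv.addRight (h : Fin n))]
  simp [lagSum, hF]

theorem sum_circulant_mul_of_symm {L : ℕ} (hLn : 2 * L < n) (a : ℕ → ℝ)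
    (A : Matrix (Fin n) (Fin n) ℝ)
    (hA : ∀ i j : Fin n, A i j = bandCoeff n L a ((j.val + n - i.val) % n))
    {F : Fin n → Fin n → ℝ} (hF : ∀ i j, F i j = F j i) :
    ∑ i, ∑ j, A i j * F i j = a 0 * lagSum F 0 + 2 * ∑ h ∈ Icc 1 L, a h * lagSum F h := by
  rw [sum_mul_eq_sum_range_lagSum _ A hA, sum_range_bandCoeff_mul hLn, mul_sum]
  refine congrArg _ (sum_congr rfl fun h hh => ?_)
  rw [lagSum_sub_eq hF (by rw [mem_Icc] at hh; omega)]
  ring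

theorem lagSum_natAbs_sub (γ : ℕ → ℝ) {h : ℕ} (hh : h < n) :
    lagSum (fun i j : Fin n => γ ((i.val : ℤ) - (j.val : ℤ)).natAbs) h
      = (n - h) * γ h + h * γ (n - h) := by
  set f : ℕ → ℝ := fun x =>
    γ ((x : ℤ) - ((if n ≤ x + h then x + h - n else x + h : ℕ) : ℤ)).natAbs
  have hf : ∀ i : Fin n, γ ((i.val : ℤ) - ((i + (h : Fin n)).val : ℤ)).natAbs = f i := fun i => by
    rw [Fin.val_add_eq_ite, Fin.val_cast_of_lt hh]
  have hlow : ∀ x ∈ range (n - h), f x = γ h := fun x hx => by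
    rw [mem_range] at hx
    simp only [f, if_neg (by omega : ¬n ≤ x + h)]
    congr 1; omega
  have hhigh : ∀ x ∈ Ico (n - h) n, f x = γ (n - h) := fun x hx => by
    rw [mem_Ico] at hx
    simp only [f, if_pos (by omega : n ≤ x + h)]
    congr 1; omega
  rw [lagSum, sum_congr rfl fun i _ => hf i, Fin.sum_univ_eq_sum_range f,
    ← sum_range_add_sum_Ico f (by omega : n - h ≤ n), sum_congr rfl hlow, sum_congr rfl hhigh,
    sum_const, sum_const, card_range, Nat.card_Ico, nsmul_eq_mul, nsmul_eq_mul,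
    Nat.cast_sub hh.le, Nat.sub_sub_self hh.le]

theorem sum_circulant_mul_natAbs_sub {L : ℕ} (hLn : 2 * L < n) (a : ℕ → ℝ)
    (A : Matrix (Fin n) (Fin n) ℝ)
    (hA : ∀ i j : Fin n, A i j = bandCoeff n L a ((j.val + n - i.val) % n)) (γ : ℕ → ℝ) :
    ∑ i, ∑ j, A i j * γ ((i.val : ℤ) - (j.val : ℤ)).natAbs
      = n * a 0 * γ 0 + 2 * ∑ h ∈ Icc 1 L, (n - h) * a h * γ h
        + 2 * ∑ h ∈ Icc 1 L, h * a h * γ (n - h) := by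
  have hlag : ∀ h ∈ Icc 1 L, a h * lagSum (fun i j : Fin n => γ ((i.val : ℤ) - j.val).natAbs) h
      = (n - h) * a h * γ h + h * a h * γ (n - h) :=
    fun h hh => by rw [lagSum_natAbs_sub γ (by rw [mem_Icc] at hh; omega)]; ring
  rw [sum_circulant_mul_of_symm hLn a A hA fun i j => congrArg γ (by omega), sum_congr rfl hlag,
    sum_add_distrib, lagSum_natAbs_sub γ (NeZero.pos n)]
  simp only [Nat.cast_zero, sub_zero, zero_mul, add_zero, Nat.sub_zero]
  ring

def CyclicJumpsSeparated (L : ℕ) (θ : Fin n → ℝ) : Prop :=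
  ∀ (p : Fin n) (m : ℕ), 0 < m → m < L → θ (p + 1) = θ p ∨ θ (p + m + 1) = θ (p + m)

theorem CyclicJumpsSeparated.sum_sq_sub {L : ℕ} {θ : Fin n → ℝ} (hθ : CyclicJumpsSeparated L θ)
    {h : ℕ} (hh : h ≤ L) :
    ∑ i, (θ (i + h) - θ i) ^ 2 = h * ∑ i, (θ (i + 1) - θ i) ^ 2 := by
  have window : ∀ i : Fin n,
      (θ (i + h) - θ i) ^ 2 = ∑ m ∈ range h, (θ (i + m + 1) - θ (i + m)) ^ 2 := by
    intro i
    -- the window from `i` to `i + h` holds at most one jump, so the cross terms vanish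
    have telescope := sum_range_sub (fun m : ℕ => θ (i + m)) h
    simp only [Nat.cast_succ, ← add_assoc, Nat.cast_zero, add_zero] at telescope
    rw [← telescope]
    refine sq_sum_of_pairwise_mul_eq_zero _ _ fun m₁ hm₁ m₂ hm₂ hne => ?_
    simp only [coe_range, Set.mem_Iio] at hm₁ hm₂
    wlog hlt : m₁ < m₂ generalizing m₁ m₂
    · rw [mul_comm]; exact this m₂ m₁ hne.symm hm₂ hm₁ (by omega)
    have hshift : i + (m₁ : Fin n) + ((m₂ - m₁ : ℕ) : Fin n) = i + m₂ := by
      rw [Nat.cast_sub hlt.le]; ring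
    rcases hθ (i + m₁) (m₂ - m₁) (by omega) (by omega) with hjump | hjump
    · rw [hjump, sub_self, zero_mul]
    · rw [hshift] at hjump; rw [hjump, sub_self, mul_zero]
  calc ∑ i, (θ (i + h) - θ i) ^ 2
      = ∑ m ∈ range h, ∑ i, (θ (i + m + 1) - θ (i + m)) ^ 2 := by
        simp only [window]; exact sum_comm
    _ = ∑ m ∈ range h, ∑ i, (θ (i + 1) - θ i) ^ 2 :=
        sum_congr rfl fun m _ =>
          Equiv.sum_comp (Equiv.addRight (m : Fin n)) fun i => (θ (i + 1) - θ i) ^ 2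
    _ = h * ∑ i, (θ (i + 1) - θ i) ^ 2 := by rw [sum_const, card_range, nsmul_eq_mul]

theorem CyclicJumpsSeparated.lagSum_mul {L : ℕ} {θ : Fin n → ℝ} (hθ : CyclicJumpsSeparated L θ)
    {h : ℕ} (hh : h ≤ L) :
    lagSum (fun i j => θ i * θ j) h = ∑ i, θ i ^ 2 - h / 2 * ∑ i, (θ (i + 1) - θ i) ^ 2 := by
  have hshift : ∑ i, θ (i + h) ^ 2 = ∑ i, θ i ^ 2 :=
    Equiv.sum_comp (Equiv.addRight (h : Fin n)) fun i => θ i ^ 2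
  have hexpand : ∑ i, (θ (i + h) - θ i) ^ 2
      = ∑ i, θ (i + h) ^ 2 - 2 * lagSum (fun i j => θ i * θ j) h + ∑ i, θ i ^ 2 := by
    simp only [lagSum, mul_sum, ← sum_sub_distrib, ← sum_add_distrib]
    exact sum_congr rfl fun i _ => by ring
  rw [hθ.sum_sq_sub hh, hshift] at hexpand
  linarith

theorem CyclicJumpsSeparated.sum_circulant_mul_eq_zero {L : ℕ} (hLn : 2 * L < n) (a : ℕ → ℝ)
    (A : Matrix (Fin n) (Fin n) ℝ)
    (hA : ∀ i j : Fin n, A i j = bandCoeff n L a ((j.val + n - i.val) % n))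
    (ha0 : a 0 + 2 * ∑ h ∈ Icc 1 L, a h = 0) (ha1 : ∑ h ∈ Icc 1 L, (h : ℝ) * a h = 0)
    {θ : Fin n → ℝ} (hθ : CyclicJumpsSeparated L θ) :
    ∑ i, ∑ j, A i j * (θ i * θ j) = 0 := by
  set S := ∑ i, θ i ^ 2
  set D := ∑ i, (θ (i + 1) - θ i) ^ 2
  have hlag : ∀ h ∈ Icc 1 L, a h * lagSum (fun i j => θ i * θ j) h = a h * S - h * a h * (D / 2) :=
    fun h hh => by rw [hθ.lagSum_mul (mem_Icc.mp hh).2]; ring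
  rw [sum_circulant_mul_of_symm hLn a A hA fun i j => mul_comm (θ i) (θ j), sum_congr rfl hlag,
    sum_sub_distrib, ← sum_mul, ← sum_mul, hθ.lagSum_mul (Nat.zero_le L)]
  linear_combination S * ha0 - D * ha1

theorem exists_breakpoint_eq_of_jump {θ : Fin n → ℝ} {k : ℕ} {t : ℕ → ℕ} {c : ℕ → ℝ}
    (hk : 0 < k) (ht0 : t 0 = 0) (htk : t k = n)
    (hconst : ∀ j < k, ∀ i : Fin n, t j ≤ i.val → i.val < t (j + 1) → θ i = c j)
    {i : Fin n} (hi : θ (i + 1) ≠ θ i) : ∃ j, 1 ≤ j ∧ j ≤ k ∧ i.val + 1 = t j := by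
  rcases Nat.lt_or_ge (i.val + 1) n with hin | hin
  · obtain ⟨j, hj, hlo, hhi⟩ := exists_le_lt_succ (k := k) (t := t) (x := i.val)
      (by omega) (by omega)
    refine ⟨j + 1, by omega, hj, ?_⟩
    by_contra hne
    have hsucc := Fin.val_add_one_of_lt' hin
    exact hi ((hconst j hj _ (by omega) (by omega)).trans (hconst j hj i hlo hhi).symm)
  · exact ⟨k, hk, le_rfl, by omega⟩

theorem cyclicJumpsSeparated_of_mem_ThetaSet {L : ℕ} {θ : Fin n → ℝ} (hθ : θ ∈ ThetaSet n L) :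
    CyclicJumpsSeparated L θ := by
  obtain ⟨k, t, c, hk, ht0, htk, hstep, hconst⟩ := hθ
  have gap := fun {a b} => add_le_of_forall_add_le_succ (a := a) (b := b) hstep
  intro p m hm hmL
  by_contra! ⟨hp, hq⟩
  obtain ⟨j₁, hj₁, hj₁k, hpt⟩ := exists_breakpoint_eq_of_jump hk ht0 htk hconst hp
  obtain ⟨j₂, hj₂, hj₂k, hqt⟩ := exists_breakpoint_eq_of_jump hk ht0 htk hconst hq
  have hLn : L ≤ n := by have := gap hk le_rfl; omega
  have hLt₂ : L ≤ t j₂ := by have := gap hj₂ hj₂k; omega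
  have hq_val : (p + (m : Fin n)).val = if n ≤ p.val + m then p.val + m - n else p.val + m := by
    rw [Fin.val_add_eq_ite, Fin.val_cast_of_lt (by omega)]
  have hp_lt := p.isLt
  rcases lt_trichotomy j₁ j₂ with h | rfl | h
  · have := gap h hj₂k
    split_ifs at hq_val <;> omega
  · split_ifs at hq_val <;> omega
  · have := gap h hj₁k
    split_ifs at hq_val <;> omega

end Cyclic

theorem stmt_4_general
    {Ω : Type*} [MeasurableSpace Ω] (μ : Measure Ω) [IsProbabilityMeasure μ]
    (n L : ℕ) (hLn : 2 * L < n)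
    (a : ℕ → ℝ) (A : Matrix (Fin n) (Fin n) ℝ)
    (hA : ∀ i j : Fin n, A i j =
      (if (j.val + n - i.val) % n ≤ L then a ((j.val + n - i.val) % n)
       else if n - L ≤ (j.val + n - i.val) % n then a (n - (j.val + n - i.val) % n)
       else 0))
    (ha0 : a 0 + 2 * ∑ h ∈ Finset.Icc 1 L, a h = 0)
    (ha1 : ∑ h ∈ Finset.Icc 1 L, (h : ℝ) * a h = 0)
    (γ : ℕ → ℝ) (θ : Fin n → ℝ) (hθ : θ ∈ ThetaSet n L) (ε : Fin n → Ω → ℝ)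
    (hint : ∀ i, Integrable (ε i) μ)
    (hint2 : ∀ i j, Integrable (fun ω => ε i ω * ε j ω) μ)
    (hmean : ∀ i, ∫ ω, ε i ω ∂μ = 0)
    (hcov : ∀ i j : Fin n, ∫ ω, ε i ω * ε j ω ∂μ = γ ((i.val : ℤ) - (j.val : ℤ)).natAbs) :
    (∫ ω, ∑ i : Fin n, ∑ j : Fin n, (θ i + ε i ω) * A i j * (θ j + ε j ω) ∂μ
      = (n : ℝ) * a 0 * γ 0
        + 2 * ∑ h ∈ Finset.Icc 1 L, ((n : ℝ) - (h : ℝ)) * a h * γ h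
        + 2 * ∑ h ∈ Finset.Icc 1 L, (h : ℝ) * a h * γ (n - h))
    ∧ (a 0 = 0 ↔ ∑ h ∈ Finset.Icc 1 L, a h = 0) := by
  have : NeZero n := ⟨by omega⟩
  refine ⟨?_, by constructor <;> intro h <;> linarith⟩
  rw [integral_quadratic_form_add μ A θ ε hint hint2 hmean]
  simp only [hcov]
  -- `hA` is `A i j = bandCoeff n L a ((j + n - i) % n)` with `bandCoeff` unfolded
  rw [(cyclicJumpsSeparated_of_mem_ThetaSet hθ).sum_circulant_mul_eq_zero hLn a A hA ha0 ha1,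
    sum_circulant_mul_natAbs_sub hLn a A hA γ, zero_add]

/-- For `A ∈ 𝒜_L` (circulant symmetric with first row
`(a_0, a_1, …, a_L, 0, …, 0, a_L, …, a_2, a_1)` and `a_0 + 2∑a_h = 0`, `∑h·a_h = 0`),
`θ ∈ Θ_L`, and `ε` mean-zero with stationary covariances,
`E[XᵀAX] = n·a_0·γ_0 + 2∑_{h=1}^L (n-h)a_h γ_h + 2∑_{h=1}^L h·a_h γ_{n-h}`;
moreover `a_0 = 0 ↔ a_1 + ⋯ + a_L = 0`. -/
theorem stmt_4
    {Ω : Type*} [MeasurableSpace Ω] (μ : Measure Ω) [IsProbabilityMeasure μ]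
    (n L : ℕ) (hL : 1 ≤ L) (hLn : 2 * L < n)
    (a : ℕ → ℝ) (A : Matrix (Fin n) (Fin n) ℝ)
    (hA : ∀ i j : Fin n, A i j =
      (if (j.val + n - i.val) % n ≤ L then a ((j.val + n - i.val) % n)
       else if n - L ≤ (j.val + n - i.val) % n then a (n - (j.val + n - i.val) % n)
       else 0))
    (ha0 : a 0 + 2 * ∑ h ∈ Finset.Icc 1 L, a h = 0)
    (ha1 : ∑ h ∈ Finset.Icc 1 L, (h : ℝ) * a h = 0)
    (γ : ℕ → ℝ) (θ : Fin n → ℝ) (hθ : θ ∈ ThetaSet n L) (ε : Fin n → Ω → ℝ)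
    (hint : ∀ i, Integrable (ε i) μ)
    (hint2 : ∀ i j, Integrable (fun ω => ε i ω * ε j ω) μ)
    (hmean : ∀ i, ∫ ω, ε i ω ∂μ = 0)
    (hcov : ∀ i j : Fin n, ∫ ω, ε i ω * ε j ω ∂μ = γ ((i.val : ℤ) - (j.val : ℤ)).natAbs) :
    (∫ ω, ∑ i : Fin n, ∑ j : Fin n, (θ i + ε i ω) * A i j * (θ j + ε j ω) ∂μ
      = (n : ℝ) * a 0 * γ 0
        + 2 * ∑ h ∈ Finset.Icc 1 L, ((n : ℝ) - (h : ℝ)) * a h * γ h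
        + 2 * ∑ h ∈ Finset.Icc 1 L, (h : ℝ) * a h * γ (n - h))
    ∧ (a 0 = 0 ↔ ∑ h ∈ Finset.Icc 1 L, a h = 0) :=
  stmt_4_general μ n L hLn a A hA ha0 ha1 γ θ hθ ε hint hint2 hmean hcov
end

section
/- Let n, L, m be integers with m + 2 ≤ L and m + 2 < n/2. Let X = θ + ε with θ ∈ Θ_L deterministic and ε a random vector with E[ε_i] = 0, E[ε_i²] < ∞, Cov(ε_i, ε_j) = γ_{|i-j|}, and γ_k = 0 for all k > m. Define T_h = Σ_{i=1}^{n} (X_i − X_{i+h})² with indices modulo n, γ̂_0 = (2n)⁻¹[(m+2)·T_{m+1} − (m+1)·T_{m+2}], and for 1 ≤ h ≤ m, γ̂_h = (2n)⁻¹[−T_h + (m+2−h)·T_{m+1} − (m+1−h)·T_{m+2}]. Then E[γ̂_0] = γ_0 and E[γ̂_h] = (1 − h/n)·γ_h for each 1 ≤ h ≤ m. -/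
open MeasureTheory Finset

/-- Circular lag-`h` squared-difference sum `T_h(x) = ∑_{i=1}^n (x_i - x_{i+h})²`,
indices taken modulo `n`. -/
def Tcirc (n h : ℕ) (x : Fin n → ℝ) : ℝ :=
  ∑ i : Fin n, (x i - x ⟨(i.val + h) % n, Nat.mod_lt _ i.pos⟩) ^ 2

namespace Stmt5Aux
variable {n : ℕ}

def sh (i : Fin n) (j : ℕ) : Fin n := ⟨(i.val + j) % n, Nat.mod_lt _ i.pos⟩

lemma sh_zero (i : Fin n) : sh i 0 = i := by
  apply Fin.ext; simp [sh, Nat.mod_eq_of_lt i.isLt]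

lemma sh_sh (i : Fin n) (a b : ℕ) : sh (sh i a) b = sh i (a + b) := by
  apply Fin.ext
  show ((i.val + a) % n + b) % n = (i.val + (a + b)) % n
  rw [Nat.mod_add_mod, Nat.add_assoc]

lemma Tcirc_eq (h : ℕ) (x : Fin n → ℝ) : Tcirc n h x = ∑ i : Fin n, (x i - x (sh i h)) ^ 2 := rfl

lemma sum_sh (g : Fin n → ℝ) (j : ℕ) : ∑ i : Fin n, g (sh i j) = ∑ i : Fin n, g i := by
  apply Fintype.sum_bijective (fun i => sh i j) ?_ _ _ (fun x => rfl)
  rw [Fintype.bijective_iff_injective_and_card]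
  refine ⟨fun a b hab => ?_, rfl⟩
  have h1 : (a.val + j) % n = (b.val + j) % n := congrArg Fin.val hab
  have h2 : a.val % n = b.val % n := Nat.ModEq.add_right_cancel' j h1
  exact Fin.ext (by rwa [Nat.mod_eq_of_lt a.isLt, Nat.mod_eq_of_lt b.isLt] at h2)

lemma sq_sum_eq {α : Type*} (s : Finset α) (a : α → ℝ)
    (h : ∀ i ∈ s, ∀ j ∈ s, i ≠ j → a i * a j = 0) :
    (∑ i ∈ s, a i) ^ 2 = ∑ i ∈ s, (a i) ^ 2 := by
  rw [sq, Finset.sum_mul_sum]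
  refine Finset.sum_congr rfl fun i hi => ?_
  rw [Finset.sum_eq_single i (fun j hj hne => h i hi j hj (Ne.symm hne)) (fun hni => absurd hi hni), sq]


lemma det_lin {n : ℕ} (L : ℕ) (hL : 0 < L) (θ : Fin n → ℝ) (hθ : θ ∈ ThetaSet n L)
    (h : ℕ) (hhL : h ≤ L) : Tcirc n h θ = h * Tcirc n 1 θ := by
  obtain ⟨k, t, c, hk, ht0, htk, hgap, hval⟩ := hθ
  have step : ∀ j, j < k → t j ≤ t (j + 1) := fun j hj =>
    le_trans (Nat.le_add_right _ L) (hgap j hj)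
  have mono : ∀ a b, a ≤ b → b ≤ k → t a ≤ t b := by
    intro a b hab hbk
    induction b with
    | zero => have : a = 0 := Nat.le_zero.mp hab; simp [this]
    | succ b ih =>
      rcases Nat.lt_or_ge a (b + 1) with h1 | h1
      · exact le_trans (ih (by omega) (by omega)) (step b (by omega))
      · have : a = b + 1 := by omega
        simp [this]
  have seg : ∀ i : Fin n, ∃ j < k, t j ≤ i.val ∧ i.val < t (j + 1) := by
    intro i
    have hi : i.val < t k := by rw [htk]; exact i.isLt
    have key : ∀ b, b ≤ k → i.val < t b → ∃ j < b, t j ≤ i.val ∧ i.val < t (j + 1) := by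
      intro b
      induction b with
      | zero => intro _ hlt; rw [ht0] at hlt; omega
      | succ b ih =>
        intro hbk hlt
        rcases Nat.lt_or_ge i.val (t b) with h1 | h1
        · obtain ⟨j, hj, hj2⟩ := ih (by omega) h1
          exact ⟨j, by omega, hj2⟩
        · exact ⟨b, by omega, h1, hlt⟩
    obtain ⟨j, hj, hj2⟩ := key k le_rfl hi
    exact ⟨j, hj, hj2⟩
  -- no double jump
  have ndj : ∀ p : Fin n, ∀ δ : ℕ, 0 < δ → δ < L → θ p ≠ θ (sh p 1) →
      θ (sh p δ) = θ (sh p (δ + 1)) := by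
    intro p δ hδ0 hδL hp
    obtain ⟨j, hjk, hj1, hj2⟩ := seg p
    have htj1n : t (j + 1) ≤ n := by rw [← htk]; exact mono (j + 1) k (by omega) le_rfl
    -- boundary
    obtain ⟨j', hj'k, hb⟩ : ∃ j' < k, t j' % n = (p.val + 1) % n := by
      rcases Nat.lt_or_ge (p.val + 1) (t (j + 1)) with h1 | h1
      · exfalso
        apply hp
        have e1 : θ p = c j := hval j hjk p hj1 hj2
        have hsv : (sh p 1) = ⟨p.val + 1, by omega⟩ := by
          apply Fin.ext
          show (p.val + 1) % n = p.val + 1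
          exact Nat.mod_eq_of_lt (by omega)
        have e2 : θ (sh p 1) = c j := by
          rw [hsv]; exact hval j hjk _ (by simp; omega) (by simpa using h1)
        rw [e1, e2]
      · have heq : p.val + 1 = t (j + 1) := by omega
        rcases Nat.lt_or_ge (j + 1) k with h2 | h2
        · exact ⟨j + 1, h2, by rw [heq]⟩
        · have : j + 1 = k := by omega
          have hpn : p.val + 1 = n := by rw [heq, this, htk]
          exact ⟨0, hk, by rw [ht0, hpn, Nat.zero_mod, Nat.mod_self]⟩
    have htj' : t j' + L ≤ t (j' + 1) := hgap j' hj'k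
    have htj'1 : t (j' + 1) ≤ n := by rw [← htk]; exact mono (j' + 1) k (by omega) le_rfl
    have hbn : t j' < n := by omega
    have hbmod : t j' % n = t j' := Nat.mod_eq_of_lt hbn
    -- the values
    have key : ∀ r : ℕ, r < L → θ ⟨(p.val + 1 + r) % n, Nat.mod_lt _ (by omega)⟩ = c j' := by
      intro r hr
      have hmod : (p.val + 1 + r) % n = t j' + r := by
        have : (p.val + 1 + r) % n = ((p.val + 1) % n + r) % n := by
          rw [Nat.mod_add_mod]
        rw [this, ← hb, hbmod]
        exact Nat.mod_eq_of_lt (by omega)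
      have : (⟨(p.val + 1 + r) % n, Nat.mod_lt _ (by omega)⟩ : Fin n) =
          ⟨t j' + r, by omega⟩ := Fin.ext hmod
      rw [this]
      exact hval j' hj'k _ (Nat.le_add_right _ _) (by simp; omega)
    have e1 : θ (sh p δ) = c j' := by
      have : sh p δ = ⟨(p.val + 1 + (δ - 1)) % n, Nat.mod_lt _ p.pos⟩ := by
        apply Fin.ext
        show (p.val + δ) % n = (p.val + 1 + (δ - 1)) % n
        congr 1; omega
      rw [this]; exact key (δ - 1) (by omega)
    have e2 : θ (sh p (δ + 1)) = c j' := by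
      have : sh p (δ + 1) = ⟨(p.val + 1 + δ) % n, Nat.mod_lt _ p.pos⟩ := by
        apply Fin.ext
        show (p.val + (δ + 1)) % n = (p.val + 1 + δ) % n
        congr 1; omega
      rw [this]; exact key δ hδL
    rw [e1, e2]
  set d : Fin n → ℝ := fun q => θ q - θ (sh q 1) with hd
  have dprod : ∀ (i : Fin n) (j1 j2 : ℕ), j1 < j2 → j2 - j1 < L →
      d (sh i j1) * d (sh i j2) = 0 := by
    intro i j1 j2 hlt hsub
    rcases eq_or_ne (d (sh i j1)) 0 with h0 | h0
    · rw [h0, zero_mul]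
    · have hne : θ (sh i j1) ≠ θ (sh (sh i j1) 1) := sub_ne_zero.mp h0
      have h1 := ndj (sh i j1) (j2 - j1) (by omega) hsub hne
      rw [sh_sh, sh_sh] at h1
      have e1 : j1 + (j2 - j1) = j2 := by omega
      have e2 : j1 + (j2 - j1 + 1) = j2 + 1 := by omega
      rw [e1, e2] at h1
      have : d (sh i j2) = 0 := by
        rw [hd]; simp only []
        rw [sh_sh]
        exact sub_eq_zero.mpr h1
      rw [this, mul_zero]
  have tel : ∀ i : Fin n, θ i - θ (sh i h) = ∑ j ∈ Finset.range h, d (sh i j) := by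
    intro i
    have e : ∀ j ∈ Finset.range h, d (sh i j) =
        (fun j => θ (sh i j)) j - (fun j => θ (sh i j)) (j + 1) := by
      intro j _
      simp only [hd]
      rw [sh_sh]
    rw [Finset.sum_congr rfl e, Finset.sum_range_sub']
    simp [sh_zero]
  calc Tcirc n h θ = ∑ i : Fin n, (∑ j ∈ Finset.range h, d (sh i j)) ^ 2 := by
        rw [Tcirc_eq]
        exact Finset.sum_congr rfl fun i _ => by rw [← tel i]
    _ = ∑ i : Fin n, ∑ j ∈ Finset.range h, (d (sh i j)) ^ 2 := by
        refine Finset.sum_congr rfl fun i _ => sq_sum_eq _ _ ?_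
        intro j1 hj1 j2 hj2 hne
        simp only [Finset.mem_range] at hj1 hj2
        rcases Nat.lt_or_ge j1 j2 with hc | hc
        · exact dprod i j1 j2 hc (by omega)
        · rw [mul_comm]; exact dprod i j2 j1 (by omega) (by omega)
    _ = ∑ j ∈ Finset.range h, ∑ i : Fin n, (d (sh i j)) ^ 2 := Finset.sum_comm
    _ = ∑ j ∈ Finset.range h, ∑ i : Fin n, (d i) ^ 2 :=
        Finset.sum_congr rfl fun j _ => sum_sh (fun q => (d q) ^ 2) j
    _ = h * Tcirc n 1 θ := by
        rw [Finset.sum_const, Finset.card_range, nsmul_eq_mul, Tcirc_eq]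




lemma expT {Ω : Type*} [MeasurableSpace Ω] (μ : Measure Ω) [IsProbabilityMeasure μ]
    {n : ℕ} (γ : ℕ → ℝ) (θ : Fin n → ℝ) (ε : Fin n → Ω → ℝ)
    (hint : ∀ i, Integrable (ε i) μ)
    (hint2 : ∀ i j, Integrable (fun ω => ε i ω * ε j ω) μ)
    (hmean : ∀ i, ∫ ω, ε i ω ∂μ = 0)
    (hcov : ∀ i j : Fin n, ∫ ω, ε i ω * ε j ω ∂μ = γ ((i.val : ℤ) - (j.val : ℤ)).natAbs)
    (h : ℕ) :
    Integrable (fun ω => Tcirc n h (fun i => θ i + ε i ω)) μ ∧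
    ∫ ω, Tcirc n h (fun i => θ i + ε i ω) ∂μ
      = Tcirc n h θ + 2 * n * γ 0
        - 2 * ∑ i : Fin n, γ (((i.val : ℤ) - (((sh i h : Fin n).val : ℤ))).natAbs) := by
  set G : Fin n → Ω → ℝ := fun i ω =>
    ((θ i - θ (sh i h)) ^ 2 + 2 * (θ i - θ (sh i h)) * (ε i ω - ε (sh i h) ω))
      + (ε i ω * ε i ω - 2 * (ε i ω * ε (sh i h) ω) + ε (sh i h) ω * ε (sh i h) ω) with hG
  have hTG : ∀ ω, Tcirc n h (fun i => θ i + ε i ω) = ∑ i : Fin n, G i ω := by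
    intro ω
    rw [Tcirc_eq]
    exact Finset.sum_congr rfl fun i _ => by rw [hG]; ring
  have I2 : ∀ i : Fin n,
      Integrable (fun ω => 2 * (θ i - θ (sh i h)) * (ε i ω - ε (sh i h) ω)) μ :=
    fun i => ((hint i).sub (hint (sh i h))).const_mul _
  have I2' : ∀ i : Fin n, Integrable (fun ω => 2 * (ε i ω * ε (sh i h) ω)) μ :=
    fun i => (hint2 i (sh i h)).const_mul 2
  have I12 : ∀ i : Fin n, Integrable (fun ω =>
      (θ i - θ (sh i h)) ^ 2 + 2 * (θ i - θ (sh i h)) * (ε i ω - ε (sh i h) ω)) μ :=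
    fun i => (integrable_const _).add (I2 i)
  have I3 : ∀ i : Fin n, Integrable (fun ω =>
      ε i ω * ε i ω - 2 * (ε i ω * ε (sh i h) ω) + ε (sh i h) ω * ε (sh i h) ω) μ :=
    fun i => ((hint2 i i).sub (I2' i)).add (hint2 (sh i h) (sh i h))
  have hGint : ∀ i : Fin n, Integrable (G i) μ := fun i => (I12 i).add (I3 i)
  have hGval : ∀ i : Fin n, ∫ ω, G i ω ∂μ
      = (θ i - θ (sh i h)) ^ 2 + 2 * γ 0
        - 2 * γ (((i.val : ℤ) - (((sh i h : Fin n).val : ℤ))).natAbs) := by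
    intro i
    have E2 : ∫ ω, 2 * (θ i - θ (sh i h)) * (ε i ω - ε (sh i h) ω) ∂μ = 0 := by
      rw [integral_const_mul, integral_sub (hint i) (hint (sh i h)), hmean, hmean]
      ring
    have E12 : ∫ ω, ((θ i - θ (sh i h)) ^ 2
        + 2 * (θ i - θ (sh i h)) * (ε i ω - ε (sh i h) ω)) ∂μ = (θ i - θ (sh i h)) ^ 2 := by
      rw [integral_add (integrable_const _) (I2 i), E2, integral_const]
      simp
    have E3 : ∫ ω, (ε i ω * ε i ω - 2 * (ε i ω * ε (sh i h) ω)
        + ε (sh i h) ω * ε (sh i h) ω) ∂μ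
        = 2 * γ 0 - 2 * γ (((i.val : ℤ) - (((sh i h : Fin n).val : ℤ))).natAbs) := by
      have I33 : Integrable (fun ω => ε i ω * ε i ω - 2 * (ε i ω * ε (sh i h) ω)) μ :=
        (hint2 i i).sub (I2' i)
      rw [integral_add I33 (hint2 (sh i h) (sh i h)),
        integral_sub (hint2 i i) (I2' i), integral_const_mul, hcov, hcov, hcov]
      have h0 : ((i.val : ℤ) - (i.val : ℤ)).natAbs = 0 := by omega
      have h0' : ((((sh i h : Fin n).val : ℤ)) - (((sh i h : Fin n).val : ℤ))).natAbs = 0 := by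
        omega
      have hsymm : ((((sh i h : Fin n).val : ℤ)) - (i.val : ℤ)).natAbs
          = ((i.val : ℤ) - (((sh i h : Fin n).val : ℤ))).natAbs := by omega
      rw [h0, h0']
      ring
    calc ∫ ω, G i ω ∂μ
        = (∫ ω, ((θ i - θ (sh i h)) ^ 2
            + 2 * (θ i - θ (sh i h)) * (ε i ω - ε (sh i h) ω)) ∂μ)
          + ∫ ω, (ε i ω * ε i ω - 2 * (ε i ω * ε (sh i h) ω)
            + ε (sh i h) ω * ε (sh i h) ω) ∂μ := integral_add (I12 i) (I3 i)
      _ = _ := by rw [E12, E3]; ring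
  constructor
  · have he : (fun ω => Tcirc n h (fun i => θ i + ε i ω)) = fun ω => ∑ i : Fin n, G i ω :=
      funext hTG
    rw [he]
    exact integrable_finset_sum _ fun i _ => hGint i
  · calc ∫ ω, Tcirc n h (fun i => θ i + ε i ω) ∂μ
        = ∫ ω, ∑ i : Fin n, G i ω ∂μ := by simp_rw [hTG]
      _ = ∑ i : Fin n, ∫ ω, G i ω ∂μ := integral_finset_sum _ fun i _ => hGint i
      _ = ∑ i : Fin n, ((θ i - θ (sh i h)) ^ 2 + 2 * γ 0
            - 2 * γ (((i.val : ℤ) - (((sh i h : Fin n).val : ℤ))).natAbs)) :=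
          Finset.sum_congr rfl fun i _ => hGval i
      _ = (∑ i : Fin n, (θ i - θ (sh i h)) ^ 2) + (n : ℝ) * (2 * γ 0)
            - 2 * ∑ i : Fin n, γ (((i.val : ℤ) - (((sh i h : Fin n).val : ℤ))).natAbs) := by
          rw [Finset.sum_sub_distrib, Finset.sum_add_distrib, Finset.sum_const,
            Finset.card_univ, Fintype.card_fin, nsmul_eq_mul, ← Finset.mul_sum]
      _ = _ := by rw [Tcirc_eq]; ring




lemma sum_gamma {n : ℕ} (γ : ℕ → ℝ) (h : ℕ) (hh : 0 < h) (hhn : h < n) :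
    ∑ i : Fin n, γ (((i.val : ℤ) - (((sh i h : Fin n).val : ℤ))).natAbs)
      = ((n - h : ℕ) : ℝ) * γ h + (h : ℝ) * γ (n - h) := by
  have e : ∀ i : Fin n, γ (((i.val : ℤ) - (((sh i h : Fin n).val : ℤ))).natAbs)
      = if i.val + h < n then γ h else γ (n - h) := by
    intro i
    have hv : (sh i h : Fin n).val = (i.val + h) % n := rfl
    by_cases hc : i.val + h < n
    · rw [if_pos hc]
      have hv2 : (sh i h : Fin n).val = i.val + h := by rw [hv, Nat.mod_eq_of_lt hc]
      congr 1
      rw [hv2]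
      omega
    · rw [if_neg hc]
      have hin := i.isLt
      have hv2 : (sh i h : Fin n).val = i.val + h - n := by
        rw [hv, Nat.mod_eq_sub_mod (by omega), Nat.mod_eq_of_lt (by omega)]
      congr 1
      rw [hv2]
      omega
  rw [Finset.sum_congr rfl (fun i _ => e i)]
  rw [Fin.sum_univ_eq_sum_range (fun v => if v + h < n then γ h else γ (n - h)) n]
  rw [Finset.range_eq_Ico, ← Finset.sum_Ico_consecutive _ (Nat.zero_le (n - h))
    (by omega : n - h ≤ n)]
  have A : ∑ i ∈ Finset.Ico 0 (n - h), (if i + h < n then γ h else γ (n - h))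
      = ((n - h : ℕ) : ℝ) * γ h := by
    rw [Finset.sum_congr rfl (fun i hi => if_pos (by
      rw [Finset.mem_Ico] at hi; omega))]
    rw [Finset.sum_const, Nat.card_Ico, nsmul_eq_mul, Nat.sub_zero]
  have B : ∑ i ∈ Finset.Ico (n - h) n, (if i + h < n then γ h else γ (n - h))
      = (h : ℝ) * γ (n - h) := by
    rw [Finset.sum_congr rfl (fun i hi => if_neg (by
      rw [Finset.mem_Ico] at hi; omega))]
    rw [Finset.sum_const, Nat.card_Ico, nsmul_eq_mul, Nat.sub_sub_self (le_of_lt hhn)]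
  rw [A, B]

end Stmt5Aux

/-- Under an `m`-dependent stationary covariance structure and a
piecewise-constant mean `θ ∈ Θ_L` with `m + 2 ≤ L` and `m + 2 < n/2`, the estimators
`γ̂_0 = (2n)⁻¹[(m+2)T_{m+1} − (m+1)T_{m+2}]` and
`γ̂_h = (2n)⁻¹[−T_h + (m+2−h)T_{m+1} − (m+1−h)T_{m+2}]` satisfy
`E[γ̂_0] = γ_0` and `E[γ̂_h] = (1 − h/n)γ_h` for `1 ≤ h ≤ m`. -/
theorem stmt_5
    {Ω : Type*} [MeasurableSpace Ω] (μ : Measure Ω) [IsProbabilityMeasure μ]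
    (n L m : ℕ) (hmL : m + 2 ≤ L) (hmn : 2 * (m + 2) < n)
    (γ : ℕ → ℝ) (θ : Fin n → ℝ) (hθ : θ ∈ ThetaSet n L)
    (ε : Fin n → Ω → ℝ)
    (hint : ∀ i, Integrable (ε i) μ)
    (hint2 : ∀ i j, Integrable (fun ω => ε i ω * ε j ω) μ)
    (hmean : ∀ i, ∫ ω, ε i ω ∂μ = 0)
    (hcov : ∀ i j : Fin n, ∫ ω, ε i ω * ε j ω ∂μ = γ ((i.val : ℤ) - (j.val : ℤ)).natAbs)
    (hmdep : ∀ k : ℕ, m < k → γ k = 0) :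
    (∫ ω, (2 * (n : ℝ))⁻¹ * (((m : ℝ) + 2) * Tcirc n (m + 1) (fun i => θ i + ε i ω)
          - ((m : ℝ) + 1) * Tcirc n (m + 2) (fun i => θ i + ε i ω)) ∂μ = γ 0)
    ∧ ∀ h : ℕ, 1 ≤ h → h ≤ m →
        ∫ ω, (2 * (n : ℝ))⁻¹ * (-(Tcirc n h (fun i => θ i + ε i ω))
            + ((m : ℝ) + 2 - (h : ℝ)) * Tcirc n (m + 1) (fun i => θ i + ε i ω)
            - ((m : ℝ) + 1 - (h : ℝ)) * Tcirc n (m + 2) (fun i => θ i + ε i ω)) ∂μ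
          = (1 - (h : ℝ) / (n : ℝ)) * γ h := by
  have hL0 : 0 < L := by omega
  have hn0 : (0 : ℝ) < (n : ℝ) := by
    have : 0 < n := by omega
    exact_mod_cast this
  have Hh := fun (h : ℕ) => Stmt5Aux.expT μ γ θ ε hint hint2 hmean hcov h
  have E1 : ∫ ω, Tcirc n (m + 1) (fun i => θ i + ε i ω) ∂μ
      = ((m : ℝ) + 1) * Tcirc n 1 θ + 2 * n * γ 0 := by
    rw [(Hh (m + 1)).2, Stmt5Aux.det_lin L hL0 θ hθ (m + 1) (by omega),
      Stmt5Aux.sum_gamma γ (m + 1) (by omega) (by omega),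
      hmdep (m + 1) (by omega), hmdep (n - (m + 1)) (by omega)]
    push_cast
    ring
  have E2 : ∫ ω, Tcirc n (m + 2) (fun i => θ i + ε i ω) ∂μ
      = ((m : ℝ) + 2) * Tcirc n 1 θ + 2 * n * γ 0 := by
    rw [(Hh (m + 2)).2, Stmt5Aux.det_lin L hL0 θ hθ (m + 2) (by omega),
      Stmt5Aux.sum_gamma γ (m + 2) (by omega) (by omega),
      hmdep (m + 2) (by omega), hmdep (n - (m + 2)) (by omega)]
    push_cast
    ring
  constructor
  · have IA : Integrable (fun ω =>
        ((m : ℝ) + 2) * Tcirc n (m + 1) (fun i => θ i + ε i ω)) μ :=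
      ((Hh (m + 1)).1).const_mul _
    have IB : Integrable (fun ω =>
        ((m : ℝ) + 1) * Tcirc n (m + 2) (fun i => θ i + ε i ω)) μ :=
      ((Hh (m + 2)).1).const_mul _
    rw [integral_const_mul, integral_sub IA IB, integral_const_mul, integral_const_mul, E1, E2]
    field_simp
    ring
  · intro h h1 hm
    have Eh : ∫ ω, Tcirc n h (fun i => θ i + ε i ω) ∂μ
        = (h : ℝ) * Tcirc n 1 θ + 2 * n * γ 0 - 2 * (((n : ℝ) - h) * γ h) := by
      rw [(Hh h).2, Stmt5Aux.det_lin L hL0 θ hθ h (by omega),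
        Stmt5Aux.sum_gamma γ h (by omega) (by omega),
        hmdep (n - h) (by omega), Nat.cast_sub (by omega : h ≤ n)]
      push_cast
      ring
    have IA : Integrable (fun ω => -(Tcirc n h (fun i => θ i + ε i ω))) μ := ((Hh h).1).neg
    have IB : Integrable (fun ω =>
        ((m : ℝ) + 2 - (h : ℝ)) * Tcirc n (m + 1) (fun i => θ i + ε i ω)) μ :=
      ((Hh (m + 1)).1).const_mul _
    have IC : Integrable (fun ω =>
        ((m : ℝ) + 1 - (h : ℝ)) * Tcirc n (m + 2) (fun i => θ i + ε i ω)) μ :=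
      ((Hh (m + 2)).1).const_mul _
    have IAB : Integrable (fun ω => -(Tcirc n h (fun i => θ i + ε i ω))
        + ((m : ℝ) + 2 - (h : ℝ)) * Tcirc n (m + 1) (fun i => θ i + ε i ω)) μ := IA.add IB
    rw [integral_const_mul, integral_sub IAB IC, integral_add IA IB, integral_neg,
      integral_const_mul, integral_const_mul, E1, E2, Eh]
    have hhn : (h : ℝ) ≤ (n : ℝ) := by
      have : h ≤ n := by omega
      exact_mod_cast this
    field_simp
    ring
end

section
/- Let n, L, h be integers with 1 ≤ h ≤ L ≤ n. Let X = θ + ε with θ ∈ Θ_L deterministic and ε a random vector with E[ε_i] = 0, E[ε_i²] < ∞, and Cov(ε_i, ε_j) = γ_{|i-j|}. Define T_h = Σ_{i=1}^{n} (X_i − X_{i+h})² and W(θ) = Σ_{i=1}^{n} (θ_i − θ_{i+1})², with all indices taken modulo n. Then E[T_h] = h·W(θ) + 2n·γ_0 − 2(n−h)·γ_h − 2h·γ_{n-h}. -/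
open MeasureTheory Finset

/-
Expanding the square, `E(X_i - X_{i+h})² = (θ_i - θ_{i+h})² + 2γ_0 - 2γ_{|i - (i+h) mod n|}`,
and the lag `|i - (i+h) mod n|` equals `h` for `n - h` indices and `n - h` for the `h` indices
that wrap around. For the deterministic part, the jumps of `θ ∈ Θ_L` are at least `L ≥ h` apart
cyclically, so a window of `h` consecutive steps contains at most one jump and
`(θ_i - θ_{i+h})² = ∑_{m<h} (θ_{i+m} - θ_{i+m+1})²`; summing over `i` and shifting the cyclic
sums gives `T_h(θ) = h W(θ)`.
-/

open Fin.NatCast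

theorem sq_sum_eq_sum_sq_of_subsingleton {ι R : Type*} [Semiring R] {s : Finset ι} {d : ι → R}
    (hd : ∀ i ∈ s, ∀ j ∈ s, d i ≠ 0 → d j ≠ 0 → i = j) :
    (∑ i ∈ s, d i) ^ 2 = ∑ i ∈ s, d i ^ 2 := by
  by_cases hex : ∃ i ∈ s, d i ≠ 0
  · obtain ⟨i, hi, hdi⟩ := hex
    have hzero : ∀ j ∈ s, j ≠ i → d j = 0 := fun j hj hji =>
      by_contra fun hdj => hji (hd j hj i hi hdj hdi)
    rw [sum_eq_single_of_mem i hi hzero,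
      sum_eq_single_of_mem i hi fun j hj hji => by rw [hzero j hj hji, sq, zero_mul]]
  · push Not at hex
    rw [sum_eq_zero hex, sum_eq_zero fun i hi => by rw [hex i hi, sq, zero_mul], sq, zero_mul]

theorem sq_sub_eq_sum_sq_of_subsingleton_jumps {R : Type*} [CommRing R] (f : ℕ → R) (h : ℕ)
    (hf : ∀ m < h, ∀ m' < h, f m ≠ f (m + 1) → f m' ≠ f (m' + 1) → m = m') :
    (f 0 - f h) ^ 2 = ∑ m ∈ range h, (f m - f (m + 1)) ^ 2 := by
  rw [← sum_range_sub', sq_sum_eq_sum_sq_of_subsingleton]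
  intro m hm m' hm' hne hne'
  exact hf m (mem_range.1 hm) m' (mem_range.1 hm') (sub_ne_zero.1 hne) (sub_ne_zero.1 hne')

theorem Fin.val_add_natCast {n : ℕ} [NeZero n] (i : Fin n) (d : ℕ) :
    ((i + d : Fin n) : ℕ) = (i + d) % n := by
  rw [Fin.val_add, Fin.val_natCast, Nat.add_mod_mod]

theorem Tcirc_eq_sum_sub_add_sq (n h : ℕ) [NeZero n] (x : Fin n → ℝ) :
    Tcirc n h x = ∑ i : Fin n, (x i - x (i + (h : Fin n))) ^ 2 := by
  refine sum_congr rfl fun i _ => ?_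
  congr 3
  exact Fin.ext (Fin.val_add_natCast i h).symm

theorem Tcirc_eq_mul_Tcirc_one_of_jumps_separated {n L h : ℕ} [NeZero n] {x : Fin n → ℝ}
    (hhL : h ≤ L)
    (hx : ∀ (i : Fin n) (d : ℕ), 0 < d → d < L → x i ≠ x (i + 1) →
      x (i + (d : Fin n)) = x (i + (d : Fin n) + 1)) :
    Tcirc n h x = h * Tcirc n 1 x := by
  have later_flat : ∀ i : Fin n, ∀ m m' : ℕ, m < m' → m' < h →
      x (i + (m : Fin n)) ≠ x (i + (m : Fin n) + 1) →
      x (i + (m' : Fin n)) = x (i + (m' : Fin n) + 1) := by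
    intro i m m' hlt hm' hne
    have := hx (i + m) (m' - m) (by omega) (by omega) hne
    rwa [add_assoc, ← Nat.cast_add, Nat.add_sub_cancel' hlt.le] at this
  have window : ∀ i : Fin n, (x i - x (i + (h : Fin n))) ^ 2
      = ∑ m ∈ range h, (x (i + (m : Fin n)) - x (i + (m : Fin n) + 1)) ^ 2 := by
    intro i
    have := sq_sub_eq_sum_sq_of_subsingleton_jumps (fun m : ℕ => x (i + (m : Fin n))) h ?_
    · simpa [add_assoc] using this
    intro m hm m' hm' hne hne'
    simp only [Nat.cast_succ, ← add_assoc] at hne hne'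
    rcases lt_trichotomy m m' with hlt | heq | hlt
    · exact absurd (later_flat i m m' hlt hm' hne) hne'
    · exact heq
    · exact absurd (later_flat i m' m hlt hm hne') hne
  have shift : ∀ m : ℕ, ∑ i : Fin n, (x (i + (m : Fin n)) - x (i + (m : Fin n) + 1)) ^ 2
      = ∑ i : Fin n, (x i - x (i + 1)) ^ 2 :=
    fun m => Equiv.sum_comp (Equiv.addRight (m : Fin n)) fun i => (x i - x (i + 1)) ^ 2
  rw [Tcirc_eq_sum_sub_add_sq, Tcirc_eq_sum_sub_add_sq, sum_congr rfl fun i _ => window i,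
    sum_comm, sum_congr rfl fun m _ => shift m, sum_const, card_range, nsmul_eq_mul, Nat.cast_one]

section Breakpoints

variable {n L k : ℕ} {t : ℕ → ℕ}

theorem add_le_of_gaps (hgap : ∀ j < k, t j + L ≤ t (j + 1)) {i j : ℕ} (hij : i < j)
    (hjk : j ≤ k) : t i + L ≤ t j := by
  induction j, hij using Nat.le_induction with
  | base => exact hgap i (by omega)
  | succ j hij ih =>
    have := ih (by omega)
    have := hgap j (by omega)
    omega

theorem le_of_gaps (hgap : ∀ j < k, t j + L ≤ t (j + 1)) {i j : ℕ} (hij : i ≤ j)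
    (hjk : j ≤ k) : t i ≤ t j := by
  rcases hij.lt_or_eq with hij | rfl
  · exact (Nat.le_add_right _ _).trans (add_le_of_gaps hgap hij hjk)
  · rfl

theorem breakpoints_ne_add_mod (hgap : ∀ j < k, t j + L ≤ t (j + 1)) (htk : t k = n)
    {a b d : ℕ} (ha : a < k) (hb : b < k) (hd : 0 < d) (hdL : d < L) :
    t b ≠ (t a + d) % n := by
  intro hab
  have haL := add_le_of_gaps hgap ha le_rfl
  have hbL := add_le_of_gaps hgap hb le_rfl
  rcases lt_or_ge (t a + d) n with hlt | hge
  · rw [Nat.mod_eq_of_lt hlt] at hab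
    have hab' : a < b := by
      by_contra! hba
      have := le_of_gaps hgap hba ha.le
      omega
    have := add_le_of_gaps hgap hab' hb.le
    omega
  · -- across the wrap-around `t b = t a + d - n`, but the last gap gives `t a + L ≤ t k = n`
    rw [Nat.mod_eq_sub_mod hge, Nat.mod_eq_of_lt (by omega)] at hab
    have hba : b < a := by
      by_contra! hab'
      have := le_of_gaps hgap hab' hb.le
      omega
    have := add_le_of_gaps hgap hba ha.le
    omega

end Breakpoints

namespace ThetaSet

variable {n L : ℕ} [NeZero n] {θ : Fin n → ℝ}

theorem exists_breakpoint_eq_of_ne {k : ℕ} {t : ℕ → ℕ} {c : ℕ → ℝ} (hk : 0 < k)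
    (ht0 : t 0 = 0) (htk : t k = n)
    (hval : ∀ j < k, ∀ i : Fin n, t j ≤ i.val → i.val < t (j + 1) → θ i = c j)
    {i : Fin n} (hi : θ i ≠ θ (i + 1)) : ∃ j < k, t j = (i + 1 : Fin n) := by
  have hex : ∃ j, i.val < t (j + 1) := ⟨k - 1, by rw [Nat.sub_add_cancel hk, htk]; exact i.isLt⟩
  obtain ⟨j, hij, hmin⟩ : ∃ j, i.val < t (j + 1) ∧ ∀ j' < j, t (j' + 1) ≤ i.val :=
    ⟨Nat.find hex, Nat.find_spec hex, fun j' hj' => not_lt.1 (Nat.find_min hex hj')⟩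
  have hjk : j < k := by
    by_contra! hkj
    have := hmin (k - 1) (by omega)
    rw [Nat.sub_add_cancel hk, htk] at this
    omega
  have htj : t j ≤ i.val := by
    cases j with
    | zero => simp [ht0]
    | succ j => exact hmin j j.lt_succ_self
  have hθi := hval j hjk i htj hij
  have hval1 : ((i + 1 : Fin n) : ℕ) = (i.val + 1) % n := by
    rw [← Nat.cast_one, Fin.val_add_natCast]
  rcases lt_or_ge (i.val + 1) n with hlt | hge
  · rw [Nat.mod_eq_of_lt hlt] at hval1
    have htj1 : t (j + 1) = i.val + 1 := by
      by_contra hne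
      exact hi (hθi.trans (hval j hjk _ (by omega) (by omega)).symm)
    refine ⟨j + 1, ?_, by rw [htj1, hval1]⟩
    by_contra! hkj
    have : j + 1 = k := by omega
    rw [this, htk] at htj1
    omega
  · refine ⟨0, hk, ?_⟩
    rw [ht0, hval1, show i.val + 1 = n by omega, Nat.mod_self]

theorem jumps_separated (hθ : θ ∈ ThetaSet n L) (i : Fin n) (d : ℕ) (hd : 0 < d) (hdL : d < L)
    (hi : θ i ≠ θ (i + 1)) : θ (i + (d : Fin n)) = θ (i + (d : Fin n) + 1) := by
  obtain ⟨k, t, c, hk, ht0, htk, hgap, hval⟩ := hθ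
  by_contra hid
  obtain ⟨a, ha, hta⟩ := exists_breakpoint_eq_of_ne hk ht0 htk hval hi
  obtain ⟨b, hb, htb⟩ := exists_breakpoint_eq_of_ne hk ht0 htk hval hid
  refine breakpoints_ne_add_mod hgap htk ha hb hd hdL ?_
  rw [htb, add_right_comm, Fin.val_add_natCast, hta]

theorem Tcirc_eq_mul_Tcirc_one {h : ℕ} (hθ : θ ∈ ThetaSet n L) (hhL : h ≤ L) :
    Tcirc n h θ = h * Tcirc n 1 θ :=
  Tcirc_eq_mul_Tcirc_one_of_jumps_separated hhL (jumps_separated hθ)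

end ThetaSet

theorem integral_sq_add_sub_add {Ω : Type*} [MeasurableSpace Ω] {μ : Measure Ω}
    [IsProbabilityMeasure μ] (a b : ℝ) {X Y : Ω → ℝ} (hX : Integrable X μ) (hY : Integrable Y μ)
    (hXX : Integrable (fun ω => X ω * X ω) μ) (hXY : Integrable (fun ω => X ω * Y ω) μ)
    (hYY : Integrable (fun ω => Y ω * Y ω) μ) (hX0 : ∫ ω, X ω ∂μ = 0) (hY0 : ∫ ω, Y ω ∂μ = 0) :
    Integrable (fun ω => (a + X ω - (b + Y ω)) ^ 2) μ ∧
      ∫ ω, (a + X ω - (b + Y ω)) ^ 2 ∂μ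
        = (a - b) ^ 2 + ∫ ω, X ω * X ω ∂μ - 2 * ∫ ω, X ω * Y ω ∂μ + ∫ ω, Y ω * Y ω ∂μ := by
  have hexp : (fun ω => (a + X ω - (b + Y ω)) ^ 2) = fun ω =>
      (a - b) ^ 2 + 2 * (a - b) * (X ω - Y ω) + (X ω * X ω - 2 * (X ω * Y ω) + Y ω * Y ω) := by
    ext ω; ring
  have hdiff : Integrable (fun ω => 2 * (a - b) * (X ω - Y ω)) μ := (hX.sub hY).const_mul _
  have hlin : Integrable (fun ω => (a - b) ^ 2 + 2 * (a - b) * (X ω - Y ω)) μ :=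
    (integrable_const _).add hdiff
  have hcross : Integrable (fun ω => 2 * (X ω * Y ω)) μ := hXY.const_mul 2
  have hXXY : Integrable (fun ω => X ω * X ω - 2 * (X ω * Y ω)) μ := hXX.sub hcross
  have hquad : Integrable (fun ω => X ω * X ω - 2 * (X ω * Y ω) + Y ω * Y ω) μ := hXXY.add hYY
  rw [hexp]
  refine ⟨hlin.add hquad, ?_⟩
  rw [integral_add hlin hquad, integral_add (integrable_const _) hdiff,
    integral_const_mul, integral_sub hX hY, integral_add hXXY hYY, integral_sub hXX hcross,
    integral_const_mul, integral_const, hX0, hY0, sub_self, mul_zero, add_zero, probReal_univ,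
    one_smul]
  ring

theorem natAbs_sub_val_add_natCast {n h : ℕ} [NeZero n] (hhn : h ≤ n) (i : Fin n) :
    ((i : ℤ) - ((i + (h : Fin n) : Fin n) : ℤ)).natAbs = if i.val + h < n then h else n - h := by
  rw [Fin.val_add_natCast]
  split_ifs with hlt
  · rw [Nat.mod_eq_of_lt hlt]
    omega
  · rw [Nat.mod_eq_sub_mod (by omega), Nat.mod_eq_of_lt (by omega)]
    omega

theorem sum_natAbs_sub_val_add_natCast {n h : ℕ} [NeZero n] (hhn : h ≤ n) (γ : ℕ → ℝ) :
    ∑ i : Fin n, γ ((i : ℤ) - ((i + (h : Fin n) : Fin n) : ℤ)).natAbs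
      = (n - h : ℕ) * γ h + h * γ (n - h) := by
  simp_rw [natAbs_sub_val_add_natCast hhn]
  rw [Fin.sum_univ_eq_sum_range (fun m => γ (if m + h < n then h else n - h)),
    show range n = range (n - h + h) by rw [Nat.sub_add_cancel hhn], sum_range_add]
  have hno_wrap : ∑ m ∈ range (n - h), γ (if m + h < n then h else n - h)
      = ∑ _m ∈ range (n - h), γ h :=
    sum_congr rfl fun m hm => by rw [if_pos (by rw [mem_range] at hm; omega)]
  have hwrap : ∑ m ∈ range h, γ (if n - h + m + h < n then h else n - h)
      = ∑ _m ∈ range h, γ (n - h) :=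
    sum_congr rfl fun m _ => by rw [if_neg (by omega)]
  rw [hno_wrap, hwrap, sum_const, sum_const, card_range, card_range, nsmul_eq_mul, nsmul_eq_mul]

/-- For `1 ≤ h ≤ L ≤ n`, `θ ∈ Θ_L` and `ε` mean-zero with stationary
covariances, `E[T_h] = h·W(θ) + 2n·γ_0 − 2(n−h)·γ_h − 2h·γ_{n-h}`. -/
theorem stmt_6
    {Ω : Type*} [MeasurableSpace Ω] (μ : Measure Ω) [IsProbabilityMeasure μ]
    (n L h : ℕ) (hh : 1 ≤ h) (hhL : h ≤ L) (hLn : L ≤ n)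
    (γ : ℕ → ℝ) (θ : Fin n → ℝ) (hθ : θ ∈ ThetaSet n L)
    (ε : Fin n → Ω → ℝ)
    (hint : ∀ i, Integrable (ε i) μ)
    (hint2 : ∀ i j, Integrable (fun ω => ε i ω * ε j ω) μ)
    (hmean : ∀ i, ∫ ω, ε i ω ∂μ = 0)
    (hcov : ∀ i j : Fin n, ∫ ω, ε i ω * ε j ω ∂μ = γ ((i.val : ℤ) - (j.val : ℤ)).natAbs) :
    ∫ ω, Tcirc n h (fun i => θ i + ε i ω) ∂μ
      = (h : ℝ) * Tcirc n 1 θ + 2 * (n : ℝ) * γ 0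
        - 2 * ((n : ℝ) - (h : ℝ)) * γ h - 2 * (h : ℝ) * γ (n - h) := by
  have : NeZero n := ⟨by omega⟩
  have hhn : h ≤ n := hhL.trans hLn
  have hterm (i : Fin n) := integral_sq_add_sub_add (θ i) (θ (i + (h : Fin n))) (hint i)
    (hint (i + (h : Fin n))) (hint2 i i) (hint2 i (i + (h : Fin n)))
    (hint2 (i + (h : Fin n)) (i + (h : Fin n))) (hmean i) (hmean (i + (h : Fin n)))
  calc ∫ ω, Tcirc n h (fun i => θ i + ε i ω) ∂μ
      = ∑ i : Fin n,
          ∫ ω, (θ i + ε i ω - (θ (i + (h : Fin n)) + ε (i + (h : Fin n)) ω)) ^ 2 ∂μ := by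
        simp_rw [Tcirc_eq_sum_sub_add_sq]
        exact integral_finsetSum _ fun i _ => (hterm i).1
    _ = ∑ i : Fin n, ((θ i - θ (i + (h : Fin n))) ^ 2 + 2 * γ 0
          - 2 * γ ((i : ℤ) - ((i + (h : Fin n) : Fin n) : ℤ)).natAbs) := by
        refine sum_congr rfl fun i _ => ?_
        rw [(hterm i).2, hcov, hcov, hcov, sub_self, sub_self, Int.natAbs_zero]
        ring
    _ = Tcirc n h θ + 2 * n * γ 0
          - 2 * ∑ i : Fin n, γ ((i : ℤ) - ((i + (h : Fin n) : Fin n) : ℤ)).natAbs := by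
        rw [Tcirc_eq_sum_sub_add_sq, sum_sub_distrib, sum_add_distrib, sum_const, card_univ,
          Fintype.card_fin, nsmul_eq_mul, mul_sum]
        ring
    _ = _ := by
        rw [ThetaSet.Tcirc_eq_mul_Tcirc_one hθ hhL, sum_natAbs_sub_val_add_natCast hhn,
          Nat.cast_sub hhn]
        ring
end

section
/- Let n, L, k be integers with 1 ≤ k ≤ L ≤ n, and let θ ∈ Θ_L. Then, with all indices taken modulo n, Σ_{i=1}^{n} (θ_i − θ_{i+k})² = k · Σ_{i=1}^{n} (θ_i − θ_{i+1})², i.e., Σ_{i=1}^{n} (θ_i − θ_{i+k})² = k·W(θ). -/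
open Finset

/-- For `1 ≤ k ≤ L ≤ n` and `θ ∈ Θ_L`,
`∑_{i=1}^n (θ_i − θ_{i+k})² = k·W(θ)` with indices modulo `n`. -/
theorem stmt_7
    (n L k : ℕ) (hk : 1 ≤ k) (hkL : k ≤ L) (hLn : L ≤ n)
    (θ : Fin n → ℝ) (hθ : θ ∈ ThetaSet n L) :
    Tcirc n k θ = (k : ℝ) * Tcirc n 1 θ := by
  classical
  obtain ⟨m, t, c, hm, ht0, htm, hgap, hconst⟩ := hθ
  have hn : 0 < n := by omega
  haveI : NeZero n := ⟨hn.ne'⟩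
  set d : ℕ → ℝ := fun a =>
    θ ⟨a % n, Nat.mod_lt a hn⟩ - θ ⟨(a + 1) % n, Nat.mod_lt _ hn⟩ with hd
  have step : ∀ j, j < m → t j < t (j + 1) := by
    intro j hj; have := hgap j hj; omega
  have mono : ∀ j', j' ≤ m → ∀ j, j ≤ j' → t j ≤ t j' := by
    intro j'
    induction j' with
    | zero => intro _ j hj; obtain rfl : j = 0 := Nat.le_zero.mp hj; exact le_rfl
    | succ p ih =>
      intro hp j hj
      rcases Nat.eq_or_lt_of_le hj with h | h
      · subst h; exact le_rfl
      · exact le_trans (ih (by omega) j (by omega)) (le_of_lt (step p (by omega)))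
  have tle : ∀ j, j ≤ m → t j ≤ n := by
    intro j hj; have := mono m le_rfl j hj; omega
  have seg : ∀ a, a < n → ∃ j, j < m ∧ t j ≤ a ∧ a < t (j + 1) := by
    intro a ha
    have hP : t (Nat.findGreatest (fun j => t j ≤ a) m) ≤ a :=
      Nat.findGreatest_spec (P := fun j => t j ≤ a) (Nat.zero_le m) (by simp [ht0])
    have hjm : Nat.findGreatest (fun j => t j ≤ a) m ≤ m :=
      Nat.findGreatest_le m
    have hjlt : Nat.findGreatest (fun j => t j ≤ a) m < m := by
      rcases Nat.lt_or_ge (Nat.findGreatest (fun j => t j ≤ a) m) m with h | h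
      · exact h
      · exfalso
        have heq : Nat.findGreatest (fun j => t j ≤ a) m = m := by omega
        rw [heq, htm] at hP; omega
    have hnot : ¬ (t (Nat.findGreatest (fun j => t j ≤ a) m + 1) ≤ a) :=
      Nat.findGreatest_is_greatest (P := fun j => t j ≤ a) (n := m)
        (k := Nat.findGreatest (fun j => t j ≤ a) m + 1) (by omega) (by omega)
    exact ⟨Nat.findGreatest (fun j => t j ≤ a) m, hjlt, hP, by omega⟩
  have dmod : ∀ a, d a = d (a % n) := by
    intro a
    simp only [hd, Nat.mod_mod_of_dvd _ dvd_rfl, Nat.mod_add_mod]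
  have jump : ∀ a, a < n → d a ≠ 0 → ∃ j, j < m ∧ a + 1 = t (j + 1) := by
    intro a ha hda
    obtain ⟨j, hj, h1, h2⟩ := seg a ha
    refine ⟨j, hj, ?_⟩
    by_contra hne
    have h3 : a + 1 < t (j + 1) := by omega
    have h4 : a + 1 < n := lt_of_lt_of_le h3 (tle (j + 1) hj)
    apply hda
    have e1 : θ ⟨a % n, Nat.mod_lt a hn⟩ = c j := by
      apply hconst j hj
      · simp only [Fin.val_mk]; rw [Nat.mod_eq_of_lt ha]; omega
      · simp only [Fin.val_mk]; rw [Nat.mod_eq_of_lt ha]; omega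
    have e2 : θ ⟨(a + 1) % n, Nat.mod_lt _ hn⟩ = c j := by
      apply hconst j hj
      · simp only [Fin.val_mk]; rw [Nat.mod_eq_of_lt h4]; omega
      · simp only [Fin.val_mk]; rw [Nat.mod_eq_of_lt h4]; omega
    simp [hd, e1, e2]
  have dz : ∀ a, a < n → ∀ s, 1 ≤ s → s < k → d a ≠ 0 → d ((a + s) % n) = 0 := by
    intro a ha s hs1 hs2 hda
    obtain ⟨j, hj, hje⟩ := jump a ha hda
    rcases Nat.lt_or_ge (j + 1) m with hj1 | hj1
    · have hg := hgap (j + 1) hj1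
      have hle2 := tle (j + 1 + 1) hj1
      have hb : (a + s) % n = a + s := Nat.mod_eq_of_lt (by omega)
      rw [hb]
      have e1 : θ ⟨(a + s) % n, Nat.mod_lt (a + s) hn⟩ = c (j + 1) := by
        apply hconst (j + 1) hj1
        · simp only [Fin.val_mk]; rw [hb]; omega
        · simp only [Fin.val_mk]; rw [hb]; omega
      have e2 : θ ⟨(a + s + 1) % n, Nat.mod_lt _ hn⟩ = c (j + 1) := by
        apply hconst (j + 1) hj1
        · simp only [Fin.val_mk]; rw [Nat.mod_eq_of_lt (show a + s + 1 < n by omega)]; omega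
        · simp only [Fin.val_mk]; rw [Nat.mod_eq_of_lt (show a + s + 1 < n by omega)]; omega
      simp [hd, e1, e2]
    · have hjm : j + 1 = m := by omega
      have htn : t (j + 1) = n := by rw [hjm, htm]
      have hL1 : L ≤ t (0 + 1) := by have := hgap 0 hm; omega
      have ht1n : t (0 + 1) ≤ n := tle (0 + 1) hm
      have hb : (a + s) % n = s - 1 := by
        have han : a + 1 = n := by omega
        have : a + s = n + (s - 1) := by omega
        rw [this, Nat.add_mod_left, Nat.mod_eq_of_lt (by omega)]
      rw [hb]
      have e1 : θ ⟨(s - 1) % n, Nat.mod_lt (s - 1) hn⟩ = c 0 := by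
        apply hconst 0 hm
        · simp only [Fin.val_mk]; rw [Nat.mod_eq_of_lt (show s - 1 < n by omega)]; omega
        · simp only [Fin.val_mk]; rw [Nat.mod_eq_of_lt (show s - 1 < n by omega)]; omega
      have e2 : θ ⟨(s - 1 + 1) % n, Nat.mod_lt _ hn⟩ = c 0 := by
        apply hconst 0 hm
        · simp only [Fin.val_mk]; rw [Nat.mod_eq_of_lt (show s - 1 + 1 < n by omega)]; omega
        · simp only [Fin.val_mk]; rw [Nat.mod_eq_of_lt (show s - 1 + 1 < n by omega)]; omega
      simp [hd, e1, e2]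
  have cross : ∀ i, i < n → ∀ j1 j2, j1 < k → j2 < k → j1 ≠ j2 →
      d (i + j1) * d (i + j2) = 0 := by
    intro i hi j1 j2 h1 h2 hne
    wlog hlt : j1 < j2 generalizing j1 j2
    · rw [mul_comm]; exact this j2 j1 h2 h1 (Ne.symm hne) (by omega)
    rcases eq_or_ne (d (i + j1)) 0 with h | h
    · rw [h, zero_mul]
    · have key := dz ((i + j1) % n) (Nat.mod_lt _ hn) (j2 - j1) (by omega) (by omega)
        (by rw [← dmod]; exact h)
      have hz : d (i + j2) = 0 := by
        rw [dmod (i + j2)]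
        have he : (i + j2) % n = ((i + j1) % n + (j2 - j1)) % n := by
          rw [Nat.mod_add_mod]; congr 1; omega
        rw [he]; exact key
      rw [hz, mul_zero]
  have tel : ∀ i K, θ ⟨i % n, Nat.mod_lt i hn⟩ - θ ⟨(i + K) % n, Nat.mod_lt _ hn⟩ =
      ∑ j ∈ range K, d (i + j) := by
    intro i K
    induction K with
    | zero => simp
    | succ K ih =>
      rw [Finset.sum_range_succ, ← ih]
      have hdk : d (i + K) =
          θ ⟨(i + K) % n, Nat.mod_lt _ hn⟩ - θ ⟨(i + K + 1) % n, Nat.mod_lt _ hn⟩ := by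
        rw [hd]
      rw [hdk, show i + (K + 1) = i + K + 1 from rfl]
      ring
  have sq' : ∀ i, i < n → (∑ j ∈ range k, d (i + j)) ^ 2 = ∑ j ∈ range k, d (i + j) ^ 2 := by
    intro i hi
    rw [sq, Finset.sum_mul_sum]
    have hcong : ∀ j ∈ range k, (∑ j2 ∈ range k, d (i + j) * d (i + j2)) = d (i + j) ^ 2 := by
      intro j hj
      rw [Finset.sum_eq_single j]
      · ring
      · intro j2 hj2 hne
        exact cross i hi j j2 (mem_range.mp hj) (mem_range.mp hj2) (Ne.symm hne)
      · intro h; exact absurd hj h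
    rw [Finset.sum_congr rfl hcong]
  have T1 : Tcirc n 1 θ = ∑ i : Fin n, d i.val ^ 2 := by
    unfold Tcirc
    refine Finset.sum_congr rfl fun i _ => ?_
    have hmk : (⟨i.val % n, Nat.mod_lt i.val hn⟩ : Fin n) = i := by
      ext; simp [Nat.mod_eq_of_lt i.isLt]
    simp only [hd, hmk]
  calc Tcirc n k θ = ∑ i : Fin n, (∑ j ∈ range k, d (i.val + j)) ^ 2 := by
        unfold Tcirc
        refine Finset.sum_congr rfl fun i _ => ?_
        rw [← tel i.val k]
        have hmk : (⟨i.val % n, Nat.mod_lt i.val hn⟩ : Fin n) = i := by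
          ext; simp [Nat.mod_eq_of_lt i.isLt]
        rw [hmk]
    _ = ∑ i : Fin n, ∑ j ∈ range k, d (i.val + j) ^ 2 :=
        Finset.sum_congr rfl fun i _ => sq' i.val i.isLt
    _ = ∑ j ∈ range k, ∑ i : Fin n, d (i.val + j) ^ 2 := Finset.sum_comm
    _ = ∑ j ∈ range k, Tcirc n 1 θ := by
        refine Finset.sum_congr rfl fun j _ => ?_
        rw [T1]
        apply Fintype.sum_equiv (Equiv.addRight (⟨j % n, Nat.mod_lt j hn⟩ : Fin n))
        intro i
        congr 1
        rw [dmod (i.val + j)]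
        congr 1
        show (i.val + j) % n = ((i + ⟨j % n, Nat.mod_lt j hn⟩ : Fin n)).val
        rw [Fin.add_def]
        simp only [Fin.val_mk]
        rw [Nat.add_mod_mod]
    _ = (k : ℝ) * Tcirc n 1 θ := by
        rw [Finset.sum_const, Finset.card_range, nsmul_eq_mul]
end

section
/- Let m ≥ 1 and define the m×(m+2) real matrix R by R_{h,h} = −1, R_{h,m+1} = m + 2 − h, R_{h,m+2} = −(m + 1 − h) for h = 1, …, m, and all other entries zero. Then (i) R·𝟙_{m+2} = 0, and (ii) for all real numbers κ and w: R·[I_{m+2} + (κ − 1)·𝟙_{m+2}𝟙_{m+2}ᵀ + 2w·H_{m+2}]·Rᵀ = I_m + [(2m² + 6m + 5) + 2(m² + 3m + 2)w]·𝟙_m𝟙_mᵀ − [(2m + 3) + 2(m + 2)w]·(η_m𝟙_mᵀ + 𝟙_mη_mᵀ) + (2 + 2w)·η_mη_mᵀ + 2w·H_m. -/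
open Matrix

/-- For the `m×(m+2)` matrix `R` with `R_{h,h} = −1`,
`R_{h,m+1} = m+2−h`, `R_{h,m+2} = −(m+1−h)` (1-based indices; here 0-based), we have
(i) `R𝟙 = 0`, and (ii) `R[I + (κ−1)𝟙𝟙ᵀ + 2wH]Rᵀ` equals the matrix
`I + [(2m²+6m+5)+2(m²+3m+2)w]𝟙𝟙ᵀ − [(2m+3)+2(m+2)w](η𝟙ᵀ+𝟙ηᵀ) + (2+2w)ηηᵀ + 2wH`. -/
theorem stmt_15
    (m : ℕ) (hm : 1 ≤ m)
    (R : Matrix (Fin m) (Fin (m + 2)) ℝ)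
    (hR : ∀ (h : Fin m) (j : Fin (m + 2)), R h j =
      if (j : ℕ) = (h : ℕ) then -1
      else if (j : ℕ) = m then (m : ℝ) + 1 - (h : ℕ)
      else if (j : ℕ) = m + 1 then -((m : ℝ) - (h : ℕ))
      else 0) :
    (R *ᵥ (fun _ => (1 : ℝ)) = 0) ∧
    ∀ κ w : ℝ,
      R * (Matrix.of fun i j : Fin (m + 2) =>
            (if i = j then (1 : ℝ) else 0) + (κ - 1)
              + 2 * w * ((min (i.val + 1) (j.val + 1) : ℕ) : ℝ)) * Rᵀ
        = Matrix.of fun i j : Fin m =>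
            (if i = j then (1 : ℝ) else 0)
            + ((2 * (m : ℝ) ^ 2 + 6 * (m : ℝ) + 5)
                + 2 * ((m : ℝ) ^ 2 + 3 * (m : ℝ) + 2) * w)
            - ((2 * (m : ℝ) + 3) + 2 * ((m : ℝ) + 2) * w)
                * (((i.val : ℝ) + 1) + ((j.val : ℝ) + 1))
            + (2 + 2 * w) * (((i.val : ℝ) + 1) * ((j.val : ℝ) + 1))
            + 2 * w * ((min (i.val + 1) (j.val + 1) : ℕ) : ℝ) := by
  have key : ∀ (i : Fin m) (f : Fin (m + 2) → ℝ),
      ∑ a : Fin (m + 2), R i a * f a =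
        -f ⟨i.val, by omega⟩ + ((m : ℝ) + 1 - i.val) * f ⟨m, by omega⟩
          - ((m : ℝ) - i.val) * f ⟨m + 1, by omega⟩ := by
    intro i f
    have hi := i.isLt
    have hsum : ∀ a : Fin (m + 2), R i a * f a =
        (if a = ⟨i.val, by omega⟩ then -f a else 0)
        + (if a = ⟨m, by omega⟩ then ((m : ℝ) + 1 - i.val) * f a else 0)
        + (if a = ⟨m + 1, by omega⟩ then -((m : ℝ) - i.val) * f a else 0) := by
      intro a
      rw [hR]
      simp only [Fin.ext_iff]
      split_ifs <;> first | ring1 | (exfalso; omega)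
    rw [Finset.sum_congr rfl (fun a _ => hsum a)]
    rw [Finset.sum_add_distrib, Finset.sum_add_distrib]
    simp [Finset.sum_ite_eq']
    ring
  constructor
  · funext i
    have := key i (fun _ => 1)
    simp only [mulVec, dotProduct] at *
    simp only [mul_one] at this ⊢
    rw [this]
    simp
    ring
  · intro κ w
    ext i j
    have hi := i.isLt
    have hj := j.isLt
    simp only [Matrix.mul_apply, Matrix.transpose_apply]
    set A : Matrix (Fin (m+2)) (Fin (m+2)) ℝ := Matrix.of fun i j : Fin (m + 2) =>
            (if i = j then (1 : ℝ) else 0) + (κ - 1)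
              + 2 * w * ((min (i.val + 1) (j.val + 1) : ℕ) : ℝ) with hA
    calc ∑ b, (∑ a, R i a * A a b) * R j b
        = ∑ b, R j b * (∑ a, R i a * A a b) := by
          exact Finset.sum_congr rfl fun b _ => mul_comm _ _
      _ = _ := by
          rw [key j (fun b => ∑ a, R i a * A a b)]
          rw [key i (fun a => A a ⟨j.val, by omega⟩),
            key i (fun a => A a ⟨m, by omega⟩),
            key i (fun a => A a ⟨m + 1, by omega⟩)]
          simp only [hA, Matrix.of_apply, Fin.mk.injEq]
          have h1 : min (i.val + 1) (m + 1) = i.val + 1 := by omega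
          have h2 : min (i.val + 1) (m + 2) = i.val + 1 := by omega
          have h3 : min (m + 1) (j.val + 1) = j.val + 1 := by omega
          have h4 : min (m + 2) (j.val + 1) = j.val + 1 := by omega
          have h5 : min (m + 1) (m + 1) = m + 1 := by omega
          have h6 : min (m + 1) (m + 2) = m + 1 := by omega
          have h7 : min (m + 2) (m + 1) = m + 1 := by omega
          have h8 : min (m + 2) (m + 2) = m + 2 := by omega
          rw [h1, h2, h3, h4, h5, h6, h7, h8]
          simp only [if_true]
          rw [if_neg (show ¬((i : ℕ) = m) by omega), if_neg (show ¬((i : ℕ) = m + 1) by omega),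
            if_neg (show ¬(m = (j : ℕ)) by omega), if_neg (show ¬(m + 1 = (j : ℕ)) by omega),
            if_neg (show ¬(m + 1 = m) by omega), if_neg (show ¬(m = m + 1) by omega)]
          by_cases hij : i = j
          · rw [if_pos hij, if_pos (congrArg Fin.val hij)]
            push_cast
            ring
          · rw [if_neg hij, if_neg (fun hc => hij (Fin.ext hc))]
            push_cast
            ring
end

section
/- For every positive integer m, the m×m matrix M₂ = 2(m² + 3m + 2)·𝟙_m𝟙_mᵀ − 2(m + 2)·(η_m𝟙_mᵀ + 𝟙_mη_mᵀ) + 2·η_mη_mᵀ + 2·H_m is symmetric positive definite. Moreover, M₂ = 2·R·H_{m+2}·Rᵀ, where R is the m×(m+2) matrix with R_{h,h} = −1, R_{h,m+1} = m + 2 − h, R_{h,m+2} = −(m + 1 − h), and all other entries zero. -/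
open Matrix

/-!
The min-matrix factors as `H = L Lᴴ` with `L` the lower triangular matrix of ones, which has
determinant one, so `H` is positive definite. The first `m` columns of `R` form the block `-I`,
so `R` has full row rank and `R H Rᵀ` is positive definite as well. Every row of `R` has only three nonzero
entries, so the factorization `M₂ = 2 R H Rᵀ` is a direct entrywise computation.
-/

section MinMatrix

variable {R : Type*} [CommRing R]

variable (R) in
def minMatrix (n : ℕ) : Matrix (Fin n) (Fin n) R :=
  of fun i j => ((min (i.val + 1) (j.val + 1) : ℕ) : R)

variable (R) in
def lowerOnes (n : ℕ) : Matrix (Fin n) (Fin n) R :=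
  of fun i j => if j ≤ i then 1 else 0

theorem minMatrix_eq_lowerOnes_mul_conjTranspose [StarRing R] (n : ℕ) :
    minMatrix R n = lowerOnes R n * (lowerOnes R n)ᴴ := by
  ext i j
  have hfilter : (Finset.univ.filter fun k : Fin n => k ≤ i ∧ k ≤ j) = Finset.Iic (min i j) := by
    ext k
    simp
  simp only [minMatrix, lowerOnes, mul_apply, conjTranspose_apply, of_apply, apply_ite star,
    star_one, star_zero, ite_mul, one_mul, zero_mul, ← ite_and, Finset.sum_boole, hfilter,
    Fin.card_Iic]
  rw [Fin.coe_min, Nat.add_min_add_right]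

theorem det_lowerOnes (n : ℕ) : (lowerOnes R n).det = 1 := by
  rw [det_of_isLowerTriangular]
  · simp [lowerOnes]
  · intro i j hij
    simp [lowerOnes, not_le.2 (show i < j from hij)]

theorem posDef_minMatrix [PartialOrder R] [StarRing R] [StarOrderedRing R] [NoZeroDivisors R]
    (n : ℕ) : (minMatrix R n).PosDef := by
  have hunit : IsUnit (lowerOnes R n) := by
    rw [isUnit_iff_isUnit_det, det_lowerOnes]
    exact isUnit_one
  rw [minMatrix_eq_lowerOnes_mul_conjTranspose]
  exact .mul_conjTranspose_self _ (vecMul_injective_of_isUnit hunit)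

end MinMatrix

section MatrixR

variable {R : Type*} [CommRing R] {m : ℕ}

variable (R) in
def matrixR (m : ℕ) : Matrix (Fin m) (Fin (m + 2)) R :=
  of fun h j =>
    if (j : ℕ) = (h : ℕ) then -1
    else if (j : ℕ) = m then (m : R) + 1 - (h : ℕ)
    else if (j : ℕ) = m + 1 then -((m : R) - (h : ℕ))
    else 0

theorem matrixR_row (h : Fin m) :
    matrixR R m h = Pi.single (Fin.castAdd 2 h) (-1)
      + Pi.single (Fin.natAdd m 0) ((m : R) + 1 - h)
      + Pi.single (Fin.natAdd m 1) (-((m : R) - h)) := by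
  ext j
  simp only [matrixR, of_apply, Pi.add_apply, Pi.single_apply, Fin.ext_iff, Fin.val_castAdd,
    Fin.val_natAdd]
  split_ifs <;> first | omega | simp

theorem sum_matrixR_mul (h : Fin m) (f : Fin (m + 2) → R) :
    ∑ j, matrixR R m h j * f j =
      -f (Fin.castAdd 2 h) + ((m : R) + 1 - h) * f (Fin.natAdd m 0)
        - ((m : R) - h) * f (Fin.natAdd m 1) := by
  change matrixR R m h ⬝ᵥ f = _
  rw [matrixR_row]
  simp only [add_dotProduct, single_dotProduct]
  ring

theorem matrixR_apply_castAdd (h k : Fin m) :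
    matrixR R m k (Fin.castAdd 2 h) = if h = k then -1 else 0 := by
  simp only [matrixR, of_apply, Fin.val_castAdd, Fin.ext_iff]
  split_ifs <;> first | omega | rfl

theorem vecMul_matrixR_castAdd (x : Fin m → R) (h : Fin m) :
    (x ᵥ* matrixR R m) (Fin.castAdd 2 h) = -x h := by
  simp [vecMul, dotProduct, matrixR_apply_castAdd]

theorem vecMul_matrixR_injective : Function.Injective (matrixR R m).vecMul := by
  intro x y hxy
  funext h
  simpa [vecMul_matrixR_castAdd] using congrFun hxy (Fin.castAdd 2 h)

theorem matrixR_mul_minMatrix_mul_transpose_apply (h k : Fin m) :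
    (matrixR R m * minMatrix R (m + 2) * (matrixR R m)ᵀ) h k =
      ((min (h.val + 1) (k.val + 1) : ℕ) : R) + (m : R) ^ 2 + m - 1 - (m + 1) * (h + k)
        + h * k := by
  have := h.isLt
  have := k.isLt
  simp only [mul_apply, transpose_apply]
  simp_rw [mul_comm _ (matrixR R m k _), sum_matrixR_mul]
  simp (disch := omega) only [minMatrix, of_apply, Fin.val_castAdd, Fin.val_natAdd, Fin.val_zero,
    Fin.val_one, min_eq_left, min_eq_right]
  push_cast
  ring

end MatrixR

theorem stmt_16_general
    (m : ℕ)
    (M2 : Matrix (Fin m) (Fin m) ℝ)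
    (hM2 : ∀ i j : Fin m, M2 i j =
      2 * ((m : ℝ) ^ 2 + 3 * (m : ℝ) + 2)
      - 2 * ((m : ℝ) + 2) * (((i.val : ℝ) + 1) + ((j.val : ℝ) + 1))
      + 2 * (((i.val : ℝ) + 1) * ((j.val : ℝ) + 1))
      + 2 * ((min (i.val + 1) (j.val + 1) : ℕ) : ℝ))
    (R : Matrix (Fin m) (Fin (m + 2)) ℝ)
    (hR : ∀ (h : Fin m) (j : Fin (m + 2)), R h j =
      if (j : ℕ) = (h : ℕ) then -1
      else if (j : ℕ) = m then (m : ℝ) + 1 - (h : ℕ)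
      else if (j : ℕ) = m + 1 then -((m : ℝ) - (h : ℕ))
      else 0)
    (H : Matrix (Fin (m + 2)) (Fin (m + 2)) ℝ)
    (hH : ∀ i j : Fin (m + 2), H i j = ((min (i.val + 1) (j.val + 1) : ℕ) : ℝ)) :
    M2.PosDef ∧ M2 = (2 : ℝ) • (R * H * Rᵀ) := by
  obtain rfl : R = matrixR ℝ m := ext hR
  obtain rfl : H = minMatrix ℝ (m + 2) := ext hH
  have hfactor : M2 = (2 : ℝ) • (matrixR ℝ m * minMatrix ℝ (m + 2) * (matrixR ℝ m)ᵀ) := by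
    ext h k
    rw [hM2, Matrix.smul_apply, matrixR_mul_minMatrix_mul_transpose_apply, smul_eq_mul]
    push_cast
    ring
  refine ⟨?_, hfactor⟩
  rw [hfactor, ← conjTranspose_eq_transpose_of_trivial]
  exact ((posDef_minMatrix _).mul_mul_conjTranspose_same vecMul_matrixR_injective).smul two_pos

/-- The matrix
`M₂ = 2(m²+3m+2)𝟙𝟙ᵀ − 2(m+2)(η𝟙ᵀ+𝟙ηᵀ) + 2ηηᵀ + 2H_m` is symmetric positive definite,
and `M₂ = 2·R·H_{m+2}·Rᵀ` for the matrix `R` with `R_{h,h} = −1`, `R_{h,m+1} = m+2−h`,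
`R_{h,m+2} = −(m+1−h)` (1-based indices). -/
theorem stmt_16
    (m : ℕ) (hm : 0 < m)
    (M2 : Matrix (Fin m) (Fin m) ℝ)
    (hM2 : ∀ i j : Fin m, M2 i j =
      2 * ((m : ℝ) ^ 2 + 3 * (m : ℝ) + 2)
      - 2 * ((m : ℝ) + 2) * (((i.val : ℝ) + 1) + ((j.val : ℝ) + 1))
      + 2 * (((i.val : ℝ) + 1) * ((j.val : ℝ) + 1))
      + 2 * ((min (i.val + 1) (j.val + 1) : ℕ) : ℝ))
    (R : Matrix (Fin m) (Fin (m + 2)) ℝ)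
    (hR : ∀ (h : Fin m) (j : Fin (m + 2)), R h j =
      if (j : ℕ) = (h : ℕ) then -1
      else if (j : ℕ) = m then (m : ℝ) + 1 - (h : ℕ)
      else if (j : ℕ) = m + 1 then -((m : ℝ) - (h : ℕ))
      else 0)
    (H : Matrix (Fin (m + 2)) (Fin (m + 2)) ℝ)
    (hH : ∀ i j : Fin (m + 2), H i j = ((min (i.val + 1) (j.val + 1) : ℕ) : ℝ)) :
    M2.PosDef ∧ M2 = (2 : ℝ) • (R * H * Rᵀ) :=
  stmt_16_general m M2 hM2 R hR H hH
end

section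
/- Let n, L, m be integers with m + 2 ≤ L ≤ n and m + 2 < n/2. Let X = θ + ε with θ ∈ Θ_L deterministic and ε a random vector with E[ε_i] = 0, E[ε_i²] < ∞, and Cov(ε_i, ε_j) = γ_{|i-j|}. Let T_h = Σ_{i=1}^{n} (X_i − X_{i+h})² (indices modulo n), T = (T_1, …, T_{m+2})ᵀ, and let 𝒫 denote the orthogonal projection of ℝ^{m+2} onto the subspace 𝒜°_{m+2} = {a ∈ ℝ^{m+2} : Σ_{h=1}^{m+2} a_h = 0 and Σ_{h=1}^{m+2} h·a_h = 0}. Then 𝒫(E[T]) = 𝒫(u), where u ∈ ℝ^{m+2} has entries u_h = −2(n − h)·γ_h − 2h·γ_{n-h}; in particular, 𝒫(E[T]) depends neither on θ nor on γ_0. -/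
open MeasureTheory Finset

/-- The subspace `𝒜°_K = {a ∈ ℝᴷ : ∑ a_h = 0, ∑ h·a_h = 0}` of the Euclidean space
`ℝᴷ` (entries indexed by `h : Fin K`, corresponding to the 1-based lag `h+1`). -/
def ASubmodule (K : ℕ) : Submodule ℝ (EuclideanSpace ℝ (Fin K)) where
  carrier := {a | ∑ h : Fin K, a h = 0 ∧ ∑ h : Fin K, ((h.val : ℝ) + 1) * a h = 0}
  add_mem' := by
    rintro x y ⟨hx1, hx2⟩ ⟨hy1, hy2⟩
    refine ⟨?_, ?_⟩
    · simpa [Finset.sum_add_distrib] using congrArg₂ (· + ·) hx1 hy1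
    · have : ∑ h : Fin K, ((h.val : ℝ) + 1) * (x h + y h)
          = ∑ h : Fin K, ((h.val : ℝ) + 1) * x h
            + ∑ h : Fin K, ((h.val : ℝ) + 1) * y h := by
        rw [← Finset.sum_add_distrib]; apply Finset.sum_congr rfl; intros; ring
      simpa [this] using congrArg₂ (· + ·) hx2 hy2
  zero_mem' := by
    constructor <;> simp
  smul_mem' := by
    rintro r x ⟨hx1, hx2⟩
    refine ⟨?_, ?_⟩
    · have : ∑ h : Fin K, (r • x) h = r * ∑ h : Fin K, x h := by
        rw [Finset.mul_sum]; apply Finset.sum_congr rfl; intros; simp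
      rw [this, hx1, mul_zero]
    · have : ∑ h : Fin K, ((h.val : ℝ) + 1) * (r • x) h
          = r * ∑ h : Fin K, ((h.val : ℝ) + 1) * x h := by
        rw [Finset.mul_sum]; apply Finset.sum_congr rfl; intros; simp; ring
      rw [this, hx2, mul_zero]

/-! `E[T_h] = T_h(θ) + 2nγ₀ + u_h`: the lag-`h` difference of `θ + ε` splits into `θ_i - θ_{i+h}`
and a centred noise part of second moment `2γ₀ - 2γ_{|i - (i+h) mod n|}`. For `θ ∈ Θ_L` and
`h ≤ L` a window of `h` consecutive cyclic increments of `θ` contains at most one jump, so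
`T_h(θ) = h · T_1(θ)`. Hence `E[T] - u` is an affine function of the lag, and affine functions are
orthogonal to `𝒜°_{m+2}`. -/

theorem sq_sum_eq_sum_sq_of_mul_eq_zero {ι R : Type*} [CommSemiring R] (s : Finset ι)
    (a : ι → R) (h : ∀ i ∈ s, ∀ j ∈ s, i ≠ j → a i * a j = 0) :
    (∑ i ∈ s, a i) ^ 2 = ∑ i ∈ s, a i ^ 2 := by
  rw [sq, sum_mul_sum]
  refine sum_congr rfl fun i hi => ?_
  rw [sum_eq_single_of_mem i hi fun j hj hji => h i hi j hj hji.symm, sq]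

theorem sub_natCast_add_eq_sum {G : Type*} [AddMonoidWithOne G] (f : G → ℝ) (x : G) (h : ℕ) :
    f (x + h) - f x = ∑ j ∈ range h, (f (x + j + 1) - f (x + j)) := by
  have := sum_range_sub (fun j : ℕ => f (x + j)) h
  simp only [Nat.cast_add, Nat.cast_one, Nat.cast_zero, add_zero, ← add_assoc] at this
  exact this.symm

theorem sum_sq_sub_natCast_add {G : Type*} [AddCommGroupWithOne G] [Fintype G] {f : G → ℝ}
    {L h : ℕ} (hf : ∀ x, f (x + 1) ≠ f x → ∀ s < L, f (x + 1 + s) = f (x + 1)) (hh : h ≤ L) :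
    ∑ x, (f x - f (x + h)) ^ 2 = h * ∑ x, (f x - f (x + 1)) ^ 2 := by
  have hsep : ∀ (x : G) (j₁ j₂ : ℕ), j₁ < j₂ → j₂ < j₁ + L →
      (f (x + j₁ + 1) - f (x + j₁)) * (f (x + j₂ + 1) - f (x + j₂)) = 0 := by
    intro x j₁ j₂ h₁₂ h₂₁
    obtain ⟨s, rfl⟩ := Nat.exists_eq_add_of_lt h₁₂
    by_cases hjump : f (x + j₁ + 1) = f (x + j₁)
    · rw [hjump, sub_self, zero_mul]
    have hconst := hf (x + j₁) hjump
    have e₁ := hconst s (by omega)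
    have e₂ := hconst (s + 1) (by omega)
    rw [show x + ↑(j₁ + s + 1) + 1 = x + j₁ + 1 + ↑(s + 1) by push_cast; abel, e₂,
      show x + ↑(j₁ + s + 1) = x + j₁ + 1 + s by push_cast; abel, e₁, sub_self, mul_zero]
  have hterm : ∀ x : G, (f x - f (x + h)) ^ 2
      = ∑ j ∈ range h, (f (x + j + 1) - f (x + j)) ^ 2 := by
    intro x
    rw [← neg_sub, neg_sq, sub_natCast_add_eq_sum]
    refine sq_sum_eq_sum_sq_of_mul_eq_zero _ _ fun j₁ hj₁ j₂ hj₂ hne => ?_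
    rw [mem_range] at hj₁ hj₂
    rcases hne.lt_or_gt with hlt | hlt
    · exact hsep x j₁ j₂ hlt (by omega)
    · rw [mul_comm]; exact hsep x j₂ j₁ hlt (by omega)
  have hshift : ∀ j : ℕ, ∑ x : G, (f (x + j + 1) - f (x + j)) ^ 2
      = ∑ x, (f x - f (x + 1)) ^ 2 := by
    intro j
    rw [← Equiv.sum_comp (Equiv.addRight (j : G)) (fun y => (f y - f (y + 1)) ^ 2)]
    refine sum_congr rfl fun x _ => ?_
    rw [Equiv.coe_addRight, ← neg_sub, neg_sq]
  simp_rw [hterm]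
  rw [sum_comm, sum_congr rfl fun j _ => hshift j, sum_const,
    card_range, nsmul_eq_mul]

theorem exists_le_lt_succ_of_le_of_lt {t : ℕ → ℕ} {k r : ℕ} (hmono : ∀ j < k, t j ≤ t (j + 1))
    (h0 : t 0 ≤ r) (hk : r < t k) : ∃ j < k, t j ≤ r ∧ r < t (j + 1) ∧ t (j + 1) ≤ t k := by
  induction k with
  | zero => omega
  | succ k ih =>
    by_cases hr : r < t k
    · obtain ⟨j, hjk, hj⟩ := ih (fun j hj => hmono j (by omega)) hr
      exact ⟨j, by omega, hj.1, hj.2.1, hj.2.2.trans (hmono k (by omega))⟩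
    · exact ⟨k, by omega, by omega, hk, le_rfl⟩

section SecondMoments

theorem sq_add_sub_add_eq {Ω : Type*} {f g : Ω → ℝ} (a b : ℝ) (ω : Ω) :
    ((a + f ω) - (b + g ω)) ^ 2 = (a - b) ^ 2 + 2 * (a - b) * f ω - 2 * (a - b) * g ω
      + (f ω * f ω - 2 * (f ω * g ω) + g ω * g ω) := by
  ring

variable {Ω : Type*} [MeasurableSpace Ω] {μ : Measure Ω} {f g : Ω → ℝ}

theorem integrable_sq_add_sub_add [IsFiniteMeasure μ] (a b : ℝ) (hf : Integrable f μ)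
    (hg : Integrable g μ) (hff : Integrable (fun ω => f ω * f ω) μ)
    (hfg : Integrable (fun ω => f ω * g ω) μ) (hgg : Integrable (fun ω => g ω * g ω) μ) :
    Integrable (fun ω => ((a + f ω) - (b + g ω)) ^ 2) μ := by
  simp_rw [sq_add_sub_add_eq]
  fun_prop

theorem integral_sq_add_sub_add_s18 [IsProbabilityMeasure μ] (a b : ℝ) (hf : Integrable f μ)
    (hg : Integrable g μ) (hff : Integrable (fun ω => f ω * f ω) μ)
    (hfg : Integrable (fun ω => f ω * g ω) μ) (hgg : Integrable (fun ω => g ω * g ω) μ)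
    (hf0 : ∫ ω, f ω ∂μ = 0) (hg0 : ∫ ω, g ω ∂μ = 0) :
    ∫ ω, ((a + f ω) - (b + g ω)) ^ 2 ∂μ
      = (a - b) ^ 2 + ((∫ ω, f ω * f ω ∂μ) - 2 * ∫ ω, f ω * g ω ∂μ + ∫ ω, g ω * g ω ∂μ) := by
  simp_rw [sq_add_sub_add_eq]
  rw [integral_add, integral_sub, integral_add, integral_add, integral_sub, integral_const,
    integral_const_mul, integral_const_mul, integral_const_mul, hf0, hg0]
  · simp
  all_goals fun_prop

end SecondMoments

section CyclicIndices

open Fin.CommRing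

theorem Fin.val_add_natCast_s18 {n : ℕ} [NeZero n] (x : Fin n) (s : ℕ) :
    (x + (s : Fin n)).val = (x.val + s) % n := by
  rw [Fin.val_add, Fin.val_natCast, Nat.add_mod_mod]

/-- A jump between `i` and `i + 1` forces `i + 1` to start a segment, of length at least `L`. -/
theorem ThetaSet.apply_add_natCast_eq_of_ne {n L : ℕ} [NeZero n] {θ : Fin n → ℝ}
    (hθ : θ ∈ ThetaSet n L) {i : Fin n} (hi : θ (i + 1) ≠ θ i) {s : ℕ} (hs : s < L) :
    θ (i + 1 + (s : Fin n)) = θ (i + 1) := by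
  obtain ⟨k, t, c, -, h0, hkn, hgap, hval⟩ := hθ
  set r := (i + 1 : Fin n).val with hr
  have hr' : i.val + 1 < n ∧ r = i.val + 1 ∨ i.val + 1 = n ∧ r = 0 := by
    rw [hr, Fin.val_add, Fin.val_one', Nat.add_mod_mod]
    rcases (show i.val + 1 ≤ n from i.isLt).lt_or_eq with h | h
    · exact Or.inl ⟨h, Nat.mod_eq_of_lt h⟩
    · exact Or.inr ⟨h, by rw [h, Nat.mod_self]⟩
  obtain ⟨j, hjk, hjr, hrj, hjn⟩ := exists_le_lt_succ_of_le_of_lt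
    (fun j hj => (Nat.le_add_right _ _).trans (hgap j hj)) (h0 ▸ r.zero_le) (hkn ▸ (i + 1).isLt)
  have hjL := hgap j hjk
  have hstart : t j = r := by
    by_contra hne
    exact hi ((hval j hjk _ hjr hrj).trans (hval j hjk i (by omega) (by omega)).symm)
  have hshift : (i + 1 + (s : Fin n)).val = r + s := by
    rw [Fin.val_add_natCast_s18, Nat.mod_eq_of_lt (by omega)]
  rw [hval j hjk (i + 1 + (s : Fin n)) (by omega) (by omega), hval j hjk (i + 1) hjr hrj]

theorem Tcirc_eq_sum {n : ℕ} [NeZero n] (h : ℕ) (x : Fin n → ℝ) :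
    Tcirc n h x = ∑ i, (x i - x (i + (h : Fin n))) ^ 2 := by
  unfold Tcirc
  refine sum_congr rfl fun i _ => ?_
  congr 3
  exact Fin.ext (Fin.val_add_natCast_s18 i h).symm

theorem Tcirc_eq_mul_Tcirc_one {n L h : ℕ} [NeZero n] {θ : Fin n → ℝ} (hθ : θ ∈ ThetaSet n L)
    (hh : h ≤ L) : Tcirc n h θ = h * Tcirc n 1 θ := by
  rw [Tcirc_eq_sum, Tcirc_eq_sum, Nat.cast_one]
  exact sum_sq_sub_natCast_add (fun _ hi _ hs => ThetaSet.apply_add_natCast_eq_of_ne hθ hi hs) hh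

theorem sum_comp_natAbs_sub_add_natCast {n : ℕ} [NeZero n] (γ : ℕ → ℝ) {h : ℕ} (hh : h ≤ n) :
    ∑ i : Fin n, γ ((i.val : ℤ) - ((i + (h : Fin n)).val : ℤ)).natAbs
      = (n - h) * γ h + h * γ (n - h) := by
  simp_rw [Fin.val_add_natCast_s18]
  rw [Fin.sum_univ_eq_sum_range (fun i => γ ((i : ℤ) - ((i + h) % n : ℕ)).natAbs) n]
  obtain ⟨d, rfl⟩ := Nat.exists_eq_add_of_le' hh
  have hfirst : ∀ i ∈ range d, γ ((i : ℤ) - ((i + h) % (d + h) : ℕ)).natAbs = γ h := by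
    intro i hi
    rw [mem_range] at hi
    rw [Nat.mod_eq_of_lt (by omega)]
    congr 1
    omega
  have hsecond : ∀ i ∈ range h,
      γ (((d + i : ℕ) : ℤ) - ((d + i + h) % (d + h) : ℕ)).natAbs = γ d := by
    intro i hi
    rw [mem_range] at hi
    rw [show d + i + h = i + (d + h) by omega, Nat.add_mod_right, Nat.mod_eq_of_lt (by omega)]
    congr 1
    omega
  rw [sum_range_add, sum_congr rfl hfirst, sum_congr rfl hsecond,
    sum_const, sum_const, card_range, card_range,
    Nat.add_sub_cancel, nsmul_eq_mul, nsmul_eq_mul]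
  push_cast
  ring

theorem integral_Tcirc_add {Ω : Type*} [MeasurableSpace Ω] (μ : Measure Ω)
    [IsProbabilityMeasure μ] {n : ℕ} [NeZero n] {h : ℕ} (hh : h ≤ n) (γ : ℕ → ℝ)
    (θ : Fin n → ℝ) (ε : Fin n → Ω → ℝ) (hint : ∀ i, Integrable (ε i) μ)
    (hint2 : ∀ i j, Integrable (fun ω => ε i ω * ε j ω) μ)
    (hmean : ∀ i, ∫ ω, ε i ω ∂μ = 0)
    (hcov : ∀ i j : Fin n, ∫ ω, ε i ω * ε j ω ∂μ = γ ((i.val : ℤ) - (j.val : ℤ)).natAbs) :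
    ∫ ω, Tcirc n h (fun i => θ i + ε i ω) ∂μ
      = Tcirc n h θ + 2 * n * γ 0 - 2 * ((n - h) * γ h + h * γ (n - h)) := by
  simp_rw [Tcirc_eq_sum]
  rw [integral_finsetSum _ fun i _ => integrable_sq_add_sub_add _ _ (hint _) (hint _)
    (hint2 _ _) (hint2 _ _) (hint2 _ _), ← sum_comp_natAbs_sub_add_natCast γ hh]
  simp_rw [integral_sq_add_sub_add_s18 _ _ (hint _) (hint _) (hint2 _ _) (hint2 _ _) (hint2 _ _)
    (hmean _) (hmean _), hcov, sub_self, Int.natAbs_zero]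
  simp only [mul_sum, sum_add_distrib, sum_sub_distrib, sum_const,
    card_univ, Fintype.card_fin, nsmul_eq_mul]
  ring

end CyclicIndices

theorem orthogonalProjectionOnto_ASubmodule_eq {K : ℕ} {u v : Fin K → ℝ} (α β : ℝ)
    (huv : ∀ k : Fin K, u k = v k + (α * ((k.val : ℝ) + 1) + β)) :
    (ASubmodule K).orthogonalProjectionOnto ((WithLp.equiv 2 (Fin K → ℝ)).symm u)
      = (ASubmodule K).orthogonalProjectionOnto ((WithLp.equiv 2 (Fin K → ℝ)).symm v) := by
  have hmem : (WithLp.equiv 2 (Fin K → ℝ)).symm u - (WithLp.equiv 2 (Fin K → ℝ)).symm v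
      ∈ (ASubmodule K)ᗮ := by
    rw [Submodule.mem_orthogonal]
    rintro a ⟨hsum, hmoment⟩
    calc _ = ∑ k : Fin K, (α * ((k.val : ℝ) + 1) + β) * a k := by
          simp [PiLp.inner_apply, huv]
      _ = α * ∑ k : Fin K, ((k.val : ℝ) + 1) * a k + β * ∑ k : Fin K, a k := by
          rw [mul_sum, mul_sum, ← sum_add_distrib]
          exact sum_congr rfl fun k _ => by ring
      _ = 0 := by rw [hsum, hmoment, mul_zero, mul_zero, add_zero]
  rw [← sub_eq_zero, ← map_sub]
  exact Submodule.orthogonalProjectionOnto_apply_of_mem_orthogonal hmem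

theorem stmt_18_general
    {Ω : Type*} [MeasurableSpace Ω] (μ : Measure Ω) [IsProbabilityMeasure μ]
    (n L m : ℕ) (hmL : m + 2 ≤ L) (hLn : L ≤ n)
    (γ : ℕ → ℝ) (θ : Fin n → ℝ) (hθ : θ ∈ ThetaSet n L)
    (ε : Fin n → Ω → ℝ)
    (hint : ∀ i, Integrable (ε i) μ)
    (hint2 : ∀ i j, Integrable (fun ω => ε i ω * ε j ω) μ)
    (hmean : ∀ i, ∫ ω, ε i ω ∂μ = 0)
    (hcov : ∀ i j : Fin n, ∫ ω, ε i ω * ε j ω ∂μ = γ ((i.val : ℤ) - (j.val : ℤ)).natAbs) :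
    Submodule.orthogonalProjectionOnto (ASubmodule (m + 2))
        ((WithLp.equiv 2 (Fin (m + 2) → ℝ)).symm
          (fun h => ∫ ω, Tcirc n (h.val + 1) (fun i => θ i + ε i ω) ∂μ))
      = Submodule.orthogonalProjectionOnto (ASubmodule (m + 2))
        ((WithLp.equiv 2 (Fin (m + 2) → ℝ)).symm
          (fun h => -2 * ((n : ℝ) - ((h.val : ℝ) + 1)) * γ (h.val + 1)
            - 2 * ((h.val : ℝ) + 1) * γ (n - (h.val + 1)))) := by
  have : NeZero n := ⟨by omega⟩
  refine orthogonalProjectionOnto_ASubmodule_eq (Tcirc n 1 θ) (2 * n * γ 0) fun h => ?_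
  have hL : h.val + 1 ≤ L := by omega
  rw [integral_Tcirc_add μ (hL.trans hLn) γ θ ε hint hint2 hmean hcov,
    Tcirc_eq_mul_Tcirc_one hθ hL]
  push_cast
  ring

/-- Let `θ ∈ Θ_L`, `ε` mean-zero with stationary covariances,
`m + 2 ≤ L ≤ n`, `m + 2 < n/2`, and `T = (T_1, …, T_{m+2})ᵀ` the circular lag
squared-difference sums of `X = θ + ε`. Then the orthogonal projection of `E[T]`
onto `𝒜°_{m+2}` equals the projection of the vector `u` with
`u_h = −2(n−h)γ_h − 2h γ_{n−h}`; in particular it depends on neither `θ` nor `γ_0`. -/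
theorem stmt_18
    {Ω : Type*} [MeasurableSpace Ω] (μ : Measure Ω) [IsProbabilityMeasure μ]
    (n L m : ℕ) (hmL : m + 2 ≤ L) (hLn : L ≤ n) (hmn : 2 * (m + 2) < n)
    (γ : ℕ → ℝ) (θ : Fin n → ℝ) (hθ : θ ∈ ThetaSet n L)
    (ε : Fin n → Ω → ℝ)
    (hint : ∀ i, Integrable (ε i) μ)
    (hint2 : ∀ i j, Integrable (fun ω => ε i ω * ε j ω) μ)
    (hmean : ∀ i, ∫ ω, ε i ω ∂μ = 0)
    (hcov : ∀ i j : Fin n, ∫ ω, ε i ω * ε j ω ∂μ = γ ((i.val : ℤ) - (j.val : ℤ)).natAbs) :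
    Submodule.orthogonalProjectionOnto (ASubmodule (m + 2))
        ((WithLp.equiv 2 (Fin (m + 2) → ℝ)).symm
          (fun h => ∫ ω, Tcirc n (h.val + 1) (fun i => θ i + ε i ω) ∂μ))
      = Submodule.orthogonalProjectionOnto (ASubmodule (m + 2))
        ((WithLp.equiv 2 (Fin (m + 2) → ℝ)).symm
          (fun h => -2 * ((n : ℝ) - ((h.val : ℝ) + 1)) * γ (h.val + 1)
            - 2 * ((h.val : ℝ) + 1) * γ (n - (h.val + 1)))) :=
  stmt_18_general μ n L m hmL hLn γ θ hθ ε hint hint2 hmean hcov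
end
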